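/- arXiv:2103.10471 — 7 statements merged into one kernel-verified Lean document; each statement's English description precedes it below -/
import Mathlib

section
/- Let α ∈ (0,1) and let f be a pmf on ℕ with finite mean, with pgf Ψ. Then the sequence of partial products φ_{n+1}(z) = ∏_{i=0}^{n} Ψ(1 − α^i + α^i z) converges uniformly on the interval [0,1] as n → ∞. -/
/-!
Each factor `Ψ(1 - αⁱ(1 - z))` lies in `[0, 1]`, and Bernoulli's inequality `xᵏ ≥ 1 + k(x - 1)`
gives `1 - Ψ(x) ≤ μ (1 - x)` with `μ` the mean of `f`, so the `i`-th factor is within `μ αⁱ` of `1`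
uniformly in `z`. For factors in `[0, 1]` the partial products decrease and
`1 - ∏ aᵢ ≤ ∑ (1 - aᵢ)`, so the `m`-th and `n`-th partial products differ by at most
`∑_{m ≤ i < n} μ αⁱ`: they are uniformly Cauchy on `[0, 1]`.
-/

open Filter Finset Topology

lemma one_sub_prod_le_sum_one_sub {ι R : Type*} [CommRing R] [LinearOrder R]
    [IsStrictOrderedRing R] (s : Finset ι) (a : ι → R)
    (h0 : ∀ i ∈ s, 0 ≤ a i) (h1 : ∀ i ∈ s, a i ≤ 1) :
    1 - ∏ i ∈ s, a i ≤ ∑ i ∈ s, (1 - a i) := by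
  induction s using Finset.cons_induction with
  | empty => simp
  | cons j s _ ih =>
    simp only [Finset.forall_mem_cons] at h0 h1
    rw [prod_cons, sum_cons]
    have hprod_le_one : ∏ i ∈ s, a i ≤ 1 := prod_le_one h0.2 h1.2
    nlinarith [ih h0.2 h1.2, mul_nonneg (sub_nonneg.2 h1.1) (sub_nonneg.2 hprod_le_one)]

section UnitIntervalProducts

variable {a : ℕ → ℝ} (ha0 : ∀ i, 0 ≤ a i) (ha1 : ∀ i, a i ≤ 1)
include ha0 ha1

lemma prod_range_sub_prod_range_mem_Icc {m n : ℕ} (hmn : m ≤ n) :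
    ∏ i ∈ range m, a i - ∏ i ∈ range n, a i ∈ Set.Icc 0 (∑ i ∈ Ico m n, (1 - a i)) := by
  rw [← prod_range_mul_prod_Ico a hmn]
  have hP0 : 0 ≤ ∏ i ∈ range m, a i := prod_nonneg fun i _ ↦ ha0 i
  have hP1 : ∏ i ∈ range m, a i ≤ 1 := prod_le_one (fun i _ ↦ ha0 i) fun i _ ↦ ha1 i
  have hQ1 : ∏ i ∈ Ico m n, a i ≤ 1 := prod_le_one (fun i _ ↦ ha0 i) fun i _ ↦ ha1 i
  have hQ := one_sub_prod_le_sum_one_sub (Ico m n) a (fun i _ ↦ ha0 i) fun i _ ↦ ha1 i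
  constructor <;> nlinarith

lemma dist_prod_range_le_dist_sum_range {u : ℕ → ℝ} (hau : ∀ i, 1 - a i ≤ u i) (m n : ℕ) :
    dist (∏ i ∈ range m, a i) (∏ i ∈ range n, a i) ≤
      dist (∑ i ∈ range m, u i) (∑ i ∈ range n, u i) := by
  wlog hmn : m ≤ n generalizing m n
  · rw [dist_comm, dist_comm (∑ i ∈ range m, u i)]
    exact this n m (le_of_not_ge hmn)
  obtain ⟨hdiff0, hdiff⟩ := prod_range_sub_prod_range_mem_Icc ha0 ha1 hmn
  rw [dist_comm (∑ i ∈ range m, u i), Real.dist_eq, abs_of_nonneg hdiff0]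
  calc ∏ i ∈ range m, a i - ∏ i ∈ range n, a i
      ≤ ∑ i ∈ Ico m n, u i := hdiff.trans (sum_le_sum fun i _ ↦ hau i)
    _ = ∑ i ∈ range n, u i - ∑ i ∈ range m, u i := sum_Ico_eq_sub u hmn
    _ ≤ dist (∑ i ∈ range n, u i) (∑ i ∈ range m, u i) := le_abs_self _

end UnitIntervalProducts

lemma uniformCauchySeqOn_prod_range {α : Type*} {a : ℕ → α → ℝ} {u : ℕ → ℝ} {s : Set α}
    (hu : Summable u) (ha : ∀ i, ∀ x ∈ s, a i x ∈ Set.Icc 0 1)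
    (hau : ∀ i, ∀ x ∈ s, 1 - a i x ≤ u i) :
    UniformCauchySeqOn (fun n x ↦ ∏ i ∈ range n, a i x) atTop s := by
  rw [Metric.uniformCauchySeqOn_iff]
  intro ε hε
  obtain ⟨N, hN⟩ := Metric.cauchySeq_iff.1 hu.hasSum.tendsto_sum_nat.cauchySeq ε hε
  refine ⟨N, fun m hm n hn x hx ↦ (hN m hm n hn).trans_le' ?_⟩
  exact dist_prod_range_le_dist_sum_range (fun i ↦ (ha i x hx).1) (fun i ↦ (ha i x hx).2)
    (fun i ↦ hau i x hx) m n

lemma UniformCauchySeqOn.exists_tendstoUniformlyOn {ι α β : Type*} [Nonempty ι]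
    [SemilatticeSup ι] [UniformSpace β] [CompleteSpace β] {F : ι → α → β} {s : Set α}
    (hF : UniformCauchySeqOn F atTop s) : ∃ φ : α → β, TendstoUniformlyOn F φ atTop s := by
  classical
  have hlim : ∀ x ∈ s, ∃ l, Tendsto (F · x) atTop (𝓝 l) :=
    fun x hx ↦ cauchySeq_tendsto_of_complete (hF.cauchySeq hx)
  refine ⟨fun x ↦ if hx : x ∈ s then (hlim x hx).choose else F (Classical.arbitrary ι) x,
    hF.tendstoUniformlyOn_of_tendsto fun x hx ↦ ?_⟩
  simpa only [hx, dite_true] using (hlim x hx).choose_spec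

section GeneratingFunction

variable {f : ℕ → ℝ} (hf0 : ∀ k, 0 ≤ f k) (hf1 : HasSum f 1) {x : ℝ} (hx : x ∈ Set.Icc 0 1)
include hf0 hf1 hx

lemma summable_mul_pow_of_mem_Icc : Summable fun k ↦ f k * x ^ k :=
  Summable.of_nonneg_of_le (fun k ↦ mul_nonneg (hf0 k) (pow_nonneg hx.1 k))
    (fun k ↦ mul_le_of_le_one_right (hf0 k) (pow_le_one₀ hx.1 hx.2)) hf1.summable

lemma tsum_mul_pow_mem_Icc : ∑' k, f k * x ^ k ∈ Set.Icc 0 1 :=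
  ⟨tsum_nonneg fun k ↦ mul_nonneg (hf0 k) (pow_nonneg hx.1 k),
    hasSum_le (fun k ↦ mul_le_of_le_one_right (hf0 k) (pow_le_one₀ hx.1 hx.2))
      (summable_mul_pow_of_mem_Icc hf0 hf1 hx).hasSum hf1⟩

lemma one_sub_tsum_mul_pow_le (hmean : Summable fun k : ℕ ↦ (k : ℝ) * f k) :
    1 - ∑' k, f k * x ^ k ≤ (∑' k : ℕ, (k : ℝ) * f k) * (1 - x) := by
  have hbernoulli : ∀ k : ℕ, f k + (x - 1) * ((k : ℝ) * f k) ≤ f k * x ^ k := fun k ↦ by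
    have h := one_add_mul_le_pow (a := x - 1) (by linarith [hx.1]) k
    rw [add_sub_cancel] at h
    nlinarith [mul_le_mul_of_nonneg_left h (hf0 k)]
  have := hasSum_le hbernoulli (hf1.add (hmean.hasSum.mul_left (x - 1)))
    (summable_mul_pow_of_mem_Icc hf0 hf1 hx).hasSum
  linarith

end GeneratingFunction

/-- Let `α ∈ (0,1)` and let `f` be a pmf on `ℕ` with finite mean, with pgf `Ψ`.
Then the sequence of partial products `φ_{n+1}(z) = ∏_{i=0}^{n} Ψ(1 − α^i + α^i z)`
converges uniformly on the interval `[0,1]` as `n → ∞`. -/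
theorem stmt_0 (α : ℝ) (hα : α ∈ Set.Ioo (0 : ℝ) 1)
    (f : ℕ → ℝ) (hf0 : ∀ k, 0 ≤ f k) (hf1 : HasSum f 1)
    (hmean : Summable fun k : ℕ => (k : ℝ) * f k)
    (Ψ : ℝ → ℝ) (hΨ : ∀ z, Ψ z = ∑' k : ℕ, f k * z ^ k) :
    ∃ φ : ℝ → ℝ, TendstoUniformlyOn
      (fun n z => ∏ i ∈ Finset.range (n + 1), Ψ (1 - α ^ i + α ^ i * z))
      φ atTop (Set.Icc 0 1) := by
  obtain ⟨hα0, hα1⟩ := hα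
  set μ := ∑' k : ℕ, (k : ℝ) * f k
  have hμ : 0 ≤ μ := tsum_nonneg fun k ↦ mul_nonneg k.cast_nonneg (hf0 k)
  have hmem : ∀ i, ∀ z ∈ Set.Icc (0 : ℝ) 1, 1 - α ^ i + α ^ i * z ∈ Set.Icc 0 1 :=
    fun i z hz ↦ by
      have := pow_le_one₀ hα0.le hα1.le (n := i)
      constructor <;> nlinarith [hz.1, hz.2, pow_nonneg hα0.le i]
  have hfactor : ∀ i, ∀ z ∈ Set.Icc (0 : ℝ) 1, 1 - Ψ (1 - α ^ i + α ^ i * z) ≤ μ * α ^ i :=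
    fun i z hz ↦ by
      rw [hΨ]
      refine (one_sub_tsum_mul_pow_le hf0 hf1 (hmem i z hz) hmean).trans ?_
      nlinarith [mul_nonneg (mul_nonneg hμ (pow_nonneg hα0.le i)) hz.1]
  obtain ⟨φ, hφ⟩ := (uniformCauchySeqOn_prod_range
    ((summable_geometric_of_lt_one hα0.le hα1).mul_left μ)
    (fun i z hz ↦ hΨ _ ▸ tsum_mul_pow_mem_Icc hf0 hf1 (hmem i z hz))
    hfactor).exists_tendstoUniformlyOn
  exact ⟨φ, fun u hu ↦ (tendsto_add_atTop_nat 1).eventually (hφ u hu)⟩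
end

section
/- Let α ∈ (0,1) and let f be a pmf on ℕ with finite mean, with pgf Ψ. Then the function φ(z) = ∏_{i=0}^∞ Ψ(1 − α^i + α^i z) is itself a pgf: there exists a pmf p on ℕ (i.e., p(r) ≥ 0 for all r and ∑_{r=0}^∞ p(r) = 1) such that φ(z) = ∑_{r=0}^∞ p(r)·z^r for every z ∈ [0,1]. -/
/-!
`Ψ (1 - a + a z)` is the generating function of the `a`-thinning of `f`, so the partial products
`φₙ(z) = ∏_{i<n} Ψ (1 - αⁱ + αⁱ z)` are the generating functions of the convolutions `qₙ` of the
thinnings with `a = αⁱ`, `i < n`. Since `1 - Ψ (1 - a) ≤ m a`, where `m` is the mean of `f`, one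
more convolution moves each coefficient by at most `m αⁿ`, so `qₙ` converges pointwise to some
`p`. Dominated convergence identifies `∑ p r z^r` with `φ(z)` for `z < 1`, and the Weierstrass
product inequality `φ(z) ≥ 1 - m (1 - z) / (1 - α)` shows that no mass escapes, so `∑ p = 1`.
-/

open Filter Finset Topology

lemma one_sub_sum_le_prod {ι : Type*} (s : Finset ι) {g : ι → ℝ} (hg0 : ∀ i, 0 ≤ g i)
    (hg1 : ∀ i, g i ≤ 1) : 1 - ∑ i ∈ s, (1 - g i) ≤ ∏ i ∈ s, g i := by
  classical
  induction s using Finset.induction_on with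
  | empty => simp
  | insert j s hj ih =>
    rw [prod_insert hj, sum_insert hj]
    have hsum : 0 ≤ ∑ i ∈ s, (1 - g i) := sum_nonneg fun i _ => sub_nonneg.2 (hg1 i)
    nlinarith [mul_le_mul_of_nonneg_left ih (hg0 j), hg1 j]

lemma one_sub_add_mul_mem_Icc {a z : ℝ} (ha0 : 0 ≤ a) (ha1 : a ≤ 1) (hz0 : 0 ≤ z)
    (hz1 : z ≤ 1) : 1 - a + a * z ∈ Set.Icc (0 : ℝ) 1 := by
  constructor <;> nlinarith

lemma summable_mul_pow_of_summable {f : ℕ → ℝ} (hf0 : ∀ k, 0 ≤ f k) (hf : Summable f) {u : ℝ}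
    (hu0 : 0 ≤ u) (hu1 : u ≤ 1) : Summable fun k => f k * u ^ k :=
  hf.of_nonneg_of_le (fun k => mul_nonneg (hf0 k) (pow_nonneg hu0 k))
    fun k => mul_le_of_le_one_right (hf0 k) (pow_le_one₀ hu0 hu1)

lemma hasProd_of_tendsto_prod_range_of_le_one {g : ℕ → ℝ} {L : ℝ} (hg0 : ∀ i, 0 ≤ g i)
    (hg1 : ∀ i, g i ≤ 1) (h : Tendsto (fun n => ∏ i ∈ range n, g i) atTop (𝓝 L)) :
    HasProd g L := by
  have hinf : HasProd g (⨅ s : Finset ℕ, ∏ i ∈ s, g i) :=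
    tendsto_atTop_ciInf (prod_anti_set_of_le_one hg0 hg1)
      ⟨0, Set.forall_mem_range.2 fun s => prod_nonneg fun i _ => hg0 i⟩
  rwa [tendsto_nhds_unique h hinf.tendsto_prod_nat]

noncomputable def cauchyProduct (a b : ℕ → ℝ) (r : ℕ) : ℝ :=
  ∑ j ∈ range (r + 1), a j * b (r - j)

lemma cauchyProduct_nonneg {a b : ℕ → ℝ} (ha : ∀ r, 0 ≤ a r) (hb : ∀ r, 0 ≤ b r) (r : ℕ) :
    0 ≤ cauchyProduct a b r :=
  sum_nonneg fun j _ => mul_nonneg (ha j) (hb (r - j))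

lemma cauchyProduct_mul_pow (a b : ℕ → ℝ) (z : ℝ) (r : ℕ) :
    cauchyProduct a b r * z ^ r =
      cauchyProduct (fun j => a j * z ^ j) (fun j => b j * z ^ j) r := by
  rw [cauchyProduct, cauchyProduct, sum_mul]
  refine sum_congr rfl fun j hj => ?_
  rw [← pow_sub_mul_pow z (Nat.le_of_lt_succ (mem_range.1 hj))]
  ring

lemma hasSum_cauchyProduct {a b : ℕ → ℝ} {A B : ℝ} (ha0 : ∀ r, 0 ≤ a r) (hb0 : ∀ r, 0 ≤ b r)
    (ha : HasSum a A) (hb : HasSum b B) : HasSum (cauchyProduct a b) (A * B) := by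
  have hnorm {c : ℕ → ℝ} {C : ℝ} (hc0 : ∀ r, 0 ≤ c r) (hc : HasSum c C) :
      Summable fun r => ‖c r‖ := by
    simpa only [Real.norm_of_nonneg (hc0 _)] using hc.summable
  rw [← ha.tsum_eq, ← hb.tsum_eq]
  exact hasSum_sum_range_mul_of_summable_norm (hnorm ha0 ha) (hnorm hb0 hb)

lemma abs_cauchyProduct_sub_le {a b : ℕ → ℝ} (ha0 : ∀ r, 0 ≤ a r) (hb0 : ∀ r, 0 ≤ b r)
    (ha : HasSum a 1) (hb : HasSum b 1) (r : ℕ) :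
    |cauchyProduct a b r - a r| ≤ 1 - b 0 := by
  have hb_le (s : ℕ) (hs : s ≠ 0) : b s ≤ 1 - b 0 := by
    have := sum_le_hasSum {0, s} (fun i _ => hb0 i) hb
    rw [sum_pair (Ne.symm hs)] at this
    linarith
  have hb0_le : b 0 ≤ 1 := by simpa using sum_le_hasSum {0} (fun i _ => hb0 i) hb
  have har : a r ≤ 1 := by simpa using sum_le_hasSum {r} (fun i _ => ha0 i) ha
  have hsplit : cauchyProduct a b r - a r
      = ∑ j ∈ range r, a j * b (r - j) - a r * (1 - b 0) := by
    rw [cauchyProduct, sum_range_succ, Nat.sub_self]; ring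
  have hlow : 0 ≤ ∑ j ∈ range r, a j * b (r - j) :=
    sum_nonneg fun j _ => mul_nonneg (ha0 j) (hb0 _)
  have hup : ∑ j ∈ range r, a j * b (r - j) ≤ (1 - a r) * (1 - b 0) := by
    calc ∑ j ∈ range r, a j * b (r - j) ≤ ∑ j ∈ range r, a j * (1 - b 0) :=
          sum_le_sum fun j hj => mul_le_mul_of_nonneg_left
            (hb_le _ (Nat.sub_ne_zero_of_lt (mem_range.1 hj))) (ha0 j)
      _ = (∑ j ∈ range r, a j) * (1 - b 0) := (sum_mul ..).symm
      _ ≤ (1 - a r) * (1 - b 0) := by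
          gcongr
          have := sum_le_hasSum (insert r (range r)) (fun i _ => ha0 i) ha
          rw [sum_insert notMem_range_self] at this
          linarith
  rw [hsplit, abs_le]
  constructor <;> nlinarith [ha0 r]

noncomputable def pgf (f : ℕ → ℝ) (u : ℝ) : ℝ := ∑' k, f k * u ^ k

/-- The law of `∑_{j < X} Bⱼ` for `X ∼ f` and independent Bernoulli(`a`) variables `Bⱼ`. -/
noncomputable def thinning (f : ℕ → ℝ) (a : ℝ) (r : ℕ) : ℝ :=
  ∑' k, f k * (k.choose r * a ^ r * (1 - a) ^ (k - r))

section Pgf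

variable {f : ℕ → ℝ} (hf0 : ∀ k, 0 ≤ f k) (hf1 : HasSum f 1)
include hf0 hf1

lemma pgf_le_one {u : ℝ} (hu0 : 0 ≤ u) (hu1 : u ≤ 1) : pgf f u ≤ 1 :=
  hasSum_le (fun k => mul_le_of_le_one_right (hf0 k) (pow_le_one₀ hu0 hu1))
    (summable_mul_pow_of_summable hf0 hf1.summable hu0 hu1).hasSum hf1

omit hf1 in
lemma pgf_nonneg {u : ℝ} (hu0 : 0 ≤ u) : 0 ≤ pgf f u :=
  tsum_nonneg fun k => mul_nonneg (hf0 k) (pow_nonneg hu0 k)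

omit hf0 in
lemma pgf_one : pgf f 1 = 1 := by
  simpa [pgf] using hf1.tsum_eq

lemma one_sub_pgf_le (hmean : Summable fun k : ℕ => (k : ℝ) * f k) {u : ℝ} (hu0 : 0 ≤ u)
    (hu1 : u ≤ 1) : 1 - pgf f u ≤ (∑' k : ℕ, (k : ℝ) * f k) * (1 - u) := by
  have hdiff : HasSum (fun k => f k - f k * u ^ k) (1 - pgf f u) :=
    hf1.sub (summable_mul_pow_of_summable hf0 hf1.summable hu0 hu1).hasSum
  rw [← tsum_mul_right]
  refine hasSum_le (f := fun k => f k - f k * u ^ k) (fun k => ?_) hdiff (hmean.mul_right _).hasSum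
  have hbernoulli : 1 + k * (u - 1) ≤ u ^ k := by
    simpa using one_add_mul_le_pow (by linarith : (-2 : ℝ) ≤ u - 1) k
  nlinarith [hf0 k]

lemma hasSum_thinning_mul_pow {a z : ℝ} (ha0 : 0 ≤ a) (ha1 : a ≤ 1) (hz0 : 0 ≤ z)
    (hz1 : z ≤ 1) : HasSum (fun r => thinning f a r * z ^ r) (pgf f (1 - a + a * z)) := by
  set t : ℕ × ℕ → ℝ := fun q => f q.1 * (q.1.choose q.2 * (a * z) ^ q.2 * (1 - a) ^ (q.1 - q.2))
  have ht0 : 0 ≤ t := fun q => mul_nonneg (hf0 q.1) (by have := sub_nonneg.2 ha1; positivity)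
  have hrow (k : ℕ) : HasSum (fun r => t (k, r)) (f k * (1 - a + a * z) ^ k) := by
    have hfin : HasSum (fun r => t (k, r)) (∑ r ∈ range (k + 1), t (k, r)) :=
      hasSum_sum_of_ne_finset_zero fun r hr => by
        simp [t, Nat.choose_eq_zero_of_lt (by simpa [Nat.lt_succ_iff] using hr : k < r)]
    convert hfin using 1
    rw [show 1 - a + a * z = a * z + (1 - a) by ring, add_pow, mul_sum]
    exact sum_congr rfl fun r _ => by simp only [t]; ring
  obtain ⟨hu0, hu1⟩ := one_sub_add_mul_mem_Icc ha0 ha1 hz0 hz1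
  have hpgf := summable_mul_pow_of_summable hf0 hf1.summable hu0 hu1
  have hts : Summable t := (summable_prod_of_nonneg ht0).2
    ⟨fun k => (hrow k).summable, by simpa only [(hrow _).tsum_eq] using hpgf⟩
  have htsum : HasSum t (pgf f (1 - a + a * z)) := by
    rw [pgf, ← (hts.hasSum.prod_fiberwise hrow).unique hpgf.hasSum]
    exact hts.hasSum
  have hcol := ((Equiv.prodComm ℕ ℕ).hasSum_iff.2 htsum).prod_fiberwise
    fun r => (hts.prod_symm.prod_factor r).hasSum
  refine hcol.congr_fun fun r => ?_
  simp only [thinning, ← tsum_mul_right]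
  exact tsum_congr fun k => by simp only [t, Prod.swap_prod_mk]; ring

omit hf1 in
lemma thinning_nonneg {a : ℝ} (ha0 : 0 ≤ a) (ha1 : a ≤ 1) (r : ℕ) : 0 ≤ thinning f a r :=
  tsum_nonneg fun k => mul_nonneg (hf0 k) (by have := sub_nonneg.2 ha1; positivity)

lemma hasSum_thinning {a : ℝ} (ha0 : 0 ≤ a) (ha1 : a ≤ 1) : HasSum (thinning f a) 1 := by
  simpa [pgf_one hf1] using hasSum_thinning_mul_pow hf0 hf1 ha0 ha1 zero_le_one le_rfl

omit hf0 hf1 in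
lemma thinning_zero (a : ℝ) : thinning f a 0 = pgf f (1 - a) := by
  simp [thinning, pgf]

end Pgf

/-- The law of `∑_{i < n} Yᵢ` for independent `Yᵢ ∼ thinning f (α ^ i)`. -/
noncomputable def thinnedSum (f : ℕ → ℝ) (α : ℝ) : ℕ → ℕ → ℝ
  | 0 => Pi.single 0 1
  | n + 1 => cauchyProduct (thinnedSum f α n) (thinning f (α ^ n))

section ThinnedSum

variable {f : ℕ → ℝ} {α : ℝ} (hf0 : ∀ k, 0 ≤ f k) (hα0 : 0 ≤ α) (hα1 : α ≤ 1)
include hf0 hα0 hα1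

lemma thinnedSum_nonneg (n r : ℕ) : 0 ≤ thinnedSum f α n r := by
  induction n generalizing r with
  | zero => by_cases hr : r = 0 <;> simp [thinnedSum, hr]
  | succ n ih =>
    exact cauchyProduct_nonneg ih (thinning_nonneg hf0 (pow_nonneg hα0 n) (pow_le_one₀ hα0 hα1)) r

variable (hf1 : HasSum f 1)
include hf1

lemma hasSum_thinnedSum_mul_pow (n : ℕ) {z : ℝ} (hz0 : 0 ≤ z) (hz1 : z ≤ 1) :
    HasSum (fun r => thinnedSum f α n r * z ^ r)
      (∏ i ∈ range n, pgf f (1 - α ^ i + α ^ i * z)) := by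
  induction n with
  | zero =>
    rw [prod_range_zero]
    convert hasSum_pi_single 0 (1 : ℝ) using 1
    ext (_ | r) <;> simp [thinnedSum]
  | succ n ih =>
    have ha0 := pow_nonneg hα0 n
    have ha1 := pow_le_one₀ hα0 hα1 (n := n)
    simp only [thinnedSum, cauchyProduct_mul_pow, prod_range_succ]
    exact hasSum_cauchyProduct
      (fun r => mul_nonneg (thinnedSum_nonneg hf0 hα0 hα1 n r) (pow_nonneg hz0 r))
      (fun r => mul_nonneg (thinning_nonneg hf0 ha0 ha1 r) (pow_nonneg hz0 r))
      ih (hasSum_thinning_mul_pow hf0 hf1 ha0 ha1 hz0 hz1)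

lemma hasSum_thinnedSum (n : ℕ) : HasSum (thinnedSum f α n) 1 := by
  simpa [pgf_one hf1] using hasSum_thinnedSum_mul_pow hf0 hα0 hα1 hf1 n zero_le_one le_rfl

variable (hmean : Summable fun k : ℕ => (k : ℝ) * f k)
include hmean

lemma abs_thinnedSum_succ_sub_le (n r : ℕ) :
    |thinnedSum f α (n + 1) r - thinnedSum f α n r| ≤ (∑' k : ℕ, (k : ℝ) * f k) * α ^ n := by
  have ha0 := pow_nonneg hα0 n
  have ha1 := pow_le_one₀ hα0 hα1 (n := n)
  calc |thinnedSum f α (n + 1) r - thinnedSum f α n r| ≤ 1 - thinning f (α ^ n) 0 :=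
        abs_cauchyProduct_sub_le (thinnedSum_nonneg hf0 hα0 hα1 n)
          (thinning_nonneg hf0 ha0 ha1) (hasSum_thinnedSum hf0 hα0 hα1 hf1 n)
          (hasSum_thinning hf0 hf1 ha0 ha1) r
    _ ≤ _ := by
      simpa [thinning_zero] using
        one_sub_pgf_le hf0 hf1 hmean (u := 1 - α ^ n) (by linarith) (by linarith)

omit hα1 in
lemma one_sub_mul_div_le_prod_pgf (hα_lt : α < 1) (n : ℕ) {z : ℝ} (hz0 : 0 ≤ z) (hz1 : z ≤ 1) :
    1 - (∑' k : ℕ, (k : ℝ) * f k) * (1 - z) / (1 - α)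
      ≤ ∏ i ∈ range n, pgf f (1 - α ^ i + α ^ i * z) := by
  set m := ∑' k : ℕ, (k : ℝ) * f k
  have hm0 : 0 ≤ m := tsum_nonneg fun k => mul_nonneg k.cast_nonneg (hf0 k)
  have hu (i : ℕ) := one_sub_add_mul_mem_Icc (pow_nonneg hα0 i) (pow_le_one₀ hα0 hα_lt.le) hz0 hz1
  have hterm (i : ℕ) : 1 - pgf f (1 - α ^ i + α ^ i * z) ≤ m * (1 - z) * α ^ i := by
    have := one_sub_pgf_le hf0 hf1 hmean (hu i).1 (hu i).2
    linarith
  have hgeom : ∑ i ∈ range n, α ^ i ≤ 1 / (1 - α) := by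
    have := geom_sum_Ico_le_of_lt_one (m := 0) (n := n) hα0 hα_lt
    rwa [← range_eq_Ico, pow_zero] at this
  calc 1 - m * (1 - z) / (1 - α) ≤ 1 - ∑ i ∈ range n, m * (1 - z) * α ^ i := by
        rw [← mul_sum, mul_div_assoc, ← mul_one_div]
        have : 0 ≤ m * (1 - z) := mul_nonneg hm0 (by linarith)
        linarith [mul_le_mul_of_nonneg_left hgeom this]
    _ ≤ 1 - ∑ i ∈ range n, (1 - pgf f (1 - α ^ i + α ^ i * z)) := by
        gcongr with i; exact hterm i
    _ ≤ _ := one_sub_sum_le_prod _ (fun i => pgf_nonneg hf0 (hu i).1)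
        fun i => pgf_le_one hf0 hf1 (hu i).1 (hu i).2

omit hα1 in
lemma exists_tendsto_thinnedSum (hα_lt : α < 1) :
    ∃ p : ℕ → ℝ, ∀ r, Tendsto (fun n => thinnedSum f α n r) atTop (𝓝 (p r)) := by
  choose p hp using fun r => cauchySeq_tendsto_of_complete <|
    cauchySeq_of_dist_le_of_summable (f := fun n => thinnedSum f α n r) _ (fun n => by
      rw [dist_comm, Real.dist_eq]
      exact abs_thinnedSum_succ_sub_le hf0 hα0 hα_lt.le hf1 hmean n r)
      ((summable_geometric_of_lt_one hα0 hα_lt).mul_left _)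
  exact ⟨p, hp⟩

end ThinnedSum

section PointwiseLimit

variable {q : ℕ → ℕ → ℝ} {p : ℕ → ℝ} (hq0 : ∀ n r, 0 ≤ q n r) (hq1 : ∀ n, HasSum (q n) 1)
  (hlim : ∀ r, Tendsto (q · r) atTop (𝓝 (p r)))
include hq0 hq1 hlim

lemma sum_le_one_of_tendsto (s : Finset ℕ) : ∑ r ∈ s, p r ≤ 1 :=
  le_of_tendsto (tendsto_finsetSum s fun r _ => hlim r)
    (Eventually.of_forall fun n => sum_le_hasSum s (fun r _ => hq0 n r) (hq1 n))

lemma tendsto_tsum_mul_pow_of_tendsto {z : ℝ} (hz0 : 0 ≤ z) (hz1 : z < 1) :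
    Tendsto (fun n => ∑' r, q n r * z ^ r) atTop (𝓝 (∑' r, p r * z ^ r)) := by
  refine tendsto_tsum_of_dominated_convergence (summable_geometric_of_lt_one hz0 hz1)
    (fun r => (hlim r).mul_const _) (Eventually.of_forall fun n r => ?_)
  have hqr : q n r ≤ 1 := by simpa using sum_le_hasSum {r} (fun i _ => hq0 n i) (hq1 n)
  rw [norm_mul, Real.norm_of_nonneg (hq0 n r), Real.norm_of_nonneg (pow_nonneg hz0 r)]
  exact mul_le_of_le_one_left (pow_nonneg hz0 r) hqr

end PointwiseLimit

lemma hasSum_one_of_one_sub_mul_le {p : ℕ → ℝ} {C : ℝ} (hp0 : ∀ r, 0 ≤ p r)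
    (hp : ∀ s : Finset ℕ, ∑ r ∈ s, p r ≤ 1)
    (hgen : ∀ z ∈ Set.Ico (0 : ℝ) 1, 1 - C * (1 - z) ≤ ∑' r, p r * z ^ r) : HasSum p 1 := by
  have hps : Summable p := summable_of_sum_le hp0 hp
  refine hps.hasSum_iff.2 (le_antisymm (hps.tsum_le_of_sum_le hp) ?_)
  have hlin : Tendsto (fun z : ℝ => 1 - C * (1 - z)) (𝓝[<] 1) (𝓝 1) := by
    have hcont : Continuous fun z : ℝ => 1 - C * (1 - z) := by fun_prop
    simpa using tendsto_nhdsWithin_of_tendsto_nhds (hcont.tendsto 1)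
  refine le_of_tendsto hlin ?_
  filter_upwards [Ioo_mem_nhdsLT zero_lt_one] with z hz
  exact (hgen z (Set.Ioo_subset_Ico_self hz)).trans <| Summable.tsum_le_tsum
    (fun r => mul_le_of_le_one_right (hp0 r) (pow_le_one₀ hz.1.le hz.2.le))
    (summable_mul_pow_of_summable hp0 hps hz.1.le hz.2.le) hps

/-- Let `α ∈ (0,1)` and let `f` be a pmf on `ℕ` with finite mean, with pgf `Ψ`.
Then `φ(z) = ∏_{i=0}^∞ Ψ(1 − α^i + α^i z)` is itself a pgf: there exists a pmf `p` on `ℕ`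
such that `φ(z) = ∑_{r=0}^∞ p(r)·z^r` for every `z ∈ [0,1]`. -/
theorem stmt_1 (α : ℝ) (hα : α ∈ Set.Ioo (0 : ℝ) 1)
    (f : ℕ → ℝ) (hf0 : ∀ k, 0 ≤ f k) (hf1 : HasSum f 1)
    (hmean : Summable fun k : ℕ => (k : ℝ) * f k)
    (Ψ : ℝ → ℝ) (hΨ : ∀ z, Ψ z = ∑' k : ℕ, f k * z ^ k) :
    ∃ p : ℕ → ℝ, (∀ r, 0 ≤ p r) ∧ HasSum p 1 ∧
      ∀ z ∈ Set.Icc (0 : ℝ) 1,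
        HasSum (fun r : ℕ => p r * z ^ r) (∏' i : ℕ, Ψ (1 - α ^ i + α ^ i * z)) := by
  obtain ⟨hα0, hα1⟩ := hα
  obtain rfl : Ψ = pgf f := funext hΨ
  have hq0 := thinnedSum_nonneg hf0 hα0.le hα1.le
  have hq1 := hasSum_thinnedSum hf0 hα0.le hα1.le hf1
  obtain ⟨p, hlim⟩ := exists_tendsto_thinnedSum hf0 hα0.le hf1 hmean hα1
  have hp0 (r : ℕ) : 0 ≤ p r := ge_of_tendsto' (hlim r) fun n => hq0 n r
  have hprod (z : ℝ) (hz : z ∈ Set.Ico (0 : ℝ) 1) :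
      Tendsto (fun n => ∏ i ∈ range n, pgf f (1 - α ^ i + α ^ i * z)) atTop
        (𝓝 (∑' r, p r * z ^ r)) := by
    simpa only [(hasSum_thinnedSum_mul_pow hf0 hα0.le hα1.le hf1 _ hz.1 hz.2.le).tsum_eq] using
      tendsto_tsum_mul_pow_of_tendsto hq0 hq1 hlim hz.1 hz.2
  have hp1 : HasSum p 1 := hasSum_one_of_one_sub_mul_le hp0
    (sum_le_one_of_tendsto hq0 hq1 hlim) fun z hz => by
      have := ge_of_tendsto' (hprod z hz) fun n =>
        one_sub_mul_div_le_prod_pgf hf0 hα0.le hf1 hmean hα1 n hz.1 hz.2.le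
      rwa [mul_div_right_comm] at this
  refine ⟨p, hp0, hp1, fun z ⟨hz0, hz1⟩ => ?_⟩
  rcases hz1.eq_or_lt with rfl | hz1
  · simpa [pgf_one hf1] using hp1
  have hu (i : ℕ) :=
    one_sub_add_mul_mem_Icc (pow_nonneg hα0.le i) (pow_le_one₀ hα0.le hα1.le) hz0 hz1.le
  rw [(hasProd_of_tendsto_prod_range_of_le_one (fun i => pgf_nonneg hf0 (hu i).1)
    (fun i => pgf_le_one hf0 hf1 (hu i).1 (hu i).2) (hprod z ⟨hz0, hz1⟩)).tprod_eq]
  exact (summable_mul_pow_of_summable hp0 hp1.summable hz0 hz1.le).hasSum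
end

section
/- Let α ∈ (0,1) and let f be a pmf on ℕ all of whose factorial moments are finite (i.e., ∑_{k=0}^∞ k(k−1)⋯(k−r+1) f(k) < ∞ for every r ≥ 1), with pgf Ψ, and let φ(z) = ∏_{i=0}^∞ Ψ(1 − α^i + α^i z) be the pgf of the pmf p. Then for every r ≥ 1 the r-th factorial cumulant of p is finite and equals κ_[r]^{(p)} = κ_[r]^{(f)} / (1 − α^r), where the r-th factorial cumulant of a pmf with pgf G is the r-th derivative at z = 1 (taken within the interval [0,1]) of the function z ↦ ln G(z). -/
/-!
Near `z = 1` write `log φ(z) = ∑ᵢ log Ψ(1 - αⁱ(1 - z))`. Finiteness of all factorial moments makes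
`Ψ` smooth up to the endpoint `1` (differentiate the power series termwise), so `log Ψ` is smooth
on `[1/2, 1]`, where `Ψ` is positive; one-sided derivatives at `1` only see the set near `1`, so
`[0, 1]` may be replaced by `[1/2, 1]`. The `j`-th derivative of the `i`-th term is
`αⁱʲ (log Ψ)⁽ʲ⁾(1 - αⁱ(1 - z))`, dominated by `C αⁱʲ` on the compact interval, which justifies
differentiating the series termwise; at `z = 1` the `r`-th derivatives sum to the geometric
series `(log Ψ)⁽ʳ⁾(1) ∑ᵢ αⁱʳ = (log Ψ)⁽ʳ⁾(1) / (1 - αʳ)`.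
-/

open Set Filter Topology
open scoped ContDiff

section TsumDeriv

variable {E : Type*} [NormedAddCommGroup E] [NormedSpace ℝ E] [CompleteSpace E]
  {s : Set ℝ} {u : ℕ → ℝ} {f f' : ℕ → ℝ → E} {x₀ x y : ℝ}

theorem summable_of_summable_hasDerivWithinAt_of_convex (hs : Convex ℝ s) (hu : Summable u)
    (hf : ∀ n, ∀ x ∈ s, HasDerivWithinAt (f n) (f' n x) s x)
    (hf' : ∀ n, ∀ x ∈ s, ‖f' n x‖ ≤ u n) (hx₀ : x₀ ∈ s) (hf0 : Summable (f · x₀))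
    (hy : y ∈ s) : Summable (f · y) := by
  have hdiff : Summable fun n => f n y - f n x₀ :=
    (hu.mul_right ‖y - x₀‖).of_norm_bounded fun n =>
      hs.norm_image_sub_le_of_norm_hasDerivWithin_le (hf n) (hf' n) hx₀ hy
  simpa using hdiff.add hf0

theorem norm_tsum_sub_tsum_sub_smul_le_of_convex (hs : Convex ℝ s) (hu : Summable u)
    (hf : ∀ n, ∀ x ∈ s, HasDerivWithinAt (f n) (f' n x) s x)
    (hf' : ∀ n, ∀ x ∈ s, ‖f' n x‖ ≤ u n) (hx : x ∈ s) (hfx : Summable (f · x)) (hy : y ∈ s) :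
    ‖∑' n, f n y - ∑' n, f n x - (y - x) • ∑' n, f' n x‖ ≤ 2 * (∑' n, u n) * ‖y - x‖ := by
  have hfy := summable_of_summable_hasDerivWithinAt_of_convex hs hu hf hf' hx hfx hy
  have hf'x : Summable (f' · x) := hu.of_norm_bounded fun n => hf' n x hx
  rw [← hfy.tsum_sub hfx, ← tsum_const_smul'' (y - x), ← (hfy.sub hfx).tsum_sub
    (hf'x.const_smul (y - x))]
  refine tsum_of_norm_bounded ((hu.hasSum.mul_left 2).mul_right ‖y - x‖) fun n => ?_
  calc ‖f n y - f n x - (y - x) • f' n x‖ ≤ ‖f n y - f n x‖ + ‖y - x‖ * ‖f' n x‖ := by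
        rw [← norm_smul]; exact norm_sub_le _ _
    _ ≤ u n * ‖y - x‖ + ‖y - x‖ * u n := by
        gcongr
        · exact hs.norm_image_sub_le_of_norm_hasDerivWithin_le (hf n) (hf' n) hx hy
        · exact hf' n x hx
    _ = 2 * u n * ‖y - x‖ := by ring

theorem hasDerivWithinAt_tsum_of_convex (hs : Convex ℝ s) (hu : Summable u)
    (hf : ∀ n, ∀ x ∈ s, HasDerivWithinAt (f n) (f' n x) s x)
    (hf' : ∀ n, ∀ x ∈ s, ‖f' n x‖ ≤ u n) (hx₀ : x₀ ∈ s) (hf0 : Summable (f · x₀)) (hx : x ∈ s) :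
    HasDerivWithinAt (fun y => ∑' n, f n y) (∑' n, f' n x) s x := by
  have hfs : ∀ y ∈ s, Summable (f · y) := fun y hy =>
    summable_of_summable_hasDerivWithinAt_of_convex hs hu hf hf' hx₀ hf0 hy
  have hf's : Summable (f' · x) := hu.of_norm_bounded fun n => hf' n x hx
  rw [hasDerivWithinAt_iff_isLittleO, Asymptotics.isLittleO_iff]
  intro c hc
  -- split off a head with finitely many terms; the tail is small by the uniform estimate
  obtain ⟨N, hN⟩ : ∃ N, ∑' n, u (n + N) < c / 4 :=
    ((tendsto_order.1 (tendsto_sum_nat_add u)).2 _ (by positivity)).exists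
  have hhead := Asymptotics.isLittleO_iff.1 (hasDerivWithinAt_iff_isLittleO.1
    (HasDerivWithinAt.fun_sum fun n (_ : n ∈ Finset.range N) => hf n x hx)) (half_pos hc)
  filter_upwards [hhead, self_mem_nhdsWithin] with y hy hys
  have htail := norm_tsum_sub_tsum_sub_smul_le_of_convex hs ((summable_nat_add_iff N).2 hu)
    (fun n => hf (n + N)) (fun n => hf' (n + N)) hx ((summable_nat_add_iff N).2 (hfs x hx)) hys
  rw [← (hfs y hys).sum_add_tsum_nat_add N, ← (hfs x hx).sum_add_tsum_nat_add N,
    ← hf's.sum_add_tsum_nat_add N]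
  calc _ = ‖(∑ n ∈ Finset.range N, f n y - ∑ n ∈ Finset.range N, f n x
          - (y - x) • ∑ n ∈ Finset.range N, f' n x)
        + (∑' n, f (n + N) y - ∑' n, f (n + N) x - (y - x) • ∑' n, f' (n + N) x)‖ := by
        rw [smul_add]; congr 1; abel
    _ ≤ c / 2 * ‖y - x‖ + 2 * (c / 4) * ‖y - x‖ := by
        refine (norm_add_le _ _).trans (add_le_add hy (htail.trans ?_))
        gcongr
    _ = c * ‖y - x‖ := by ring

end TsumDeriv

section DerivTower

variable {E : Type*} [NormedAddCommGroup E] [NormedSpace ℝ E] {s : Set ℝ} {F : ℕ → ℝ → E}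

theorem eqOn_iteratedDerivWithin_of_hasDerivWithinAt_succ (hs : UniqueDiffOn ℝ s) {n : ℕ}
    (hF : ∀ j < n, ∀ z ∈ s, HasDerivWithinAt (F j) (F (j + 1) z) s z) :
    EqOn (iteratedDerivWithin n (F 0) s) (F n) s := by
  induction n with
  | zero => simp [EqOn]
  | succ n ih =>
    intro z hz
    rw [iteratedDerivWithin_succ, derivWithin_congr (ih fun j hj => hF j (by omega))
      (ih (fun j hj => hF j (by omega)) hz)]
    exact (hF n n.lt_succ_self z hz).derivWithin (hs z hz)

theorem contDiffOn_of_hasDerivWithinAt_succ (hs : UniqueDiffOn ℝ s)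
    (hF : ∀ j, ∀ z ∈ s, HasDerivWithinAt (F j) (F (j + 1) z) s z) :
    ContDiffOn ℝ ∞ (F 0) s :=
  contDiffOn_of_differentiableOn_deriv (n := ⊤) fun m _ =>
    DifferentiableOn.congr (fun z hz => (hF m z hz).differentiableWithinAt)
      (eqOn_iteratedDerivWithin_of_hasDerivWithinAt_succ hs fun j _ => hF j)

end DerivTower

section PowerSeries

noncomputable def powerSeriesDeriv (a : ℕ → ℝ) (j : ℕ) (z : ℝ) : ℝ :=
  ∑' k, (k.descFactorial j : ℝ) * a k * z ^ (k - j)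

variable {a : ℕ → ℝ}

theorem norm_descFactorial_mul_pow_le {j k : ℕ} {z : ℝ} (hz : z ∈ Icc (-1) 1) :
    ‖(k.descFactorial j : ℝ) * a k * z ^ (k - j)‖ ≤ k.descFactorial j * ‖a k‖ := by
  rw [norm_mul, norm_mul, norm_pow, Real.norm_natCast]
  exact mul_le_of_le_one_right (by positivity) (pow_le_one₀ (norm_nonneg z) (abs_le.2 hz))

theorem hasDerivWithinAt_powerSeriesDeriv
    (ha : ∀ j, Summable fun k => (k.descFactorial j : ℝ) * ‖a k‖) (j : ℕ) {z : ℝ}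
    (hz : z ∈ Icc (-1) 1) :
    HasDerivWithinAt (powerSeriesDeriv a j) (powerSeriesDeriv a (j + 1) z) (Icc (-1) 1) z := by
  refine hasDerivWithinAt_tsum_of_convex (convex_Icc _ _) (ha (j + 1)) (fun k x _ => ?_)
    (fun k x hx => norm_descFactorial_mul_pow_le hx) hz
    ((ha j).of_norm_bounded fun k => norm_descFactorial_mul_pow_le hz) hz
  refine (((hasDerivAt_pow (k - j) x).hasDerivWithinAt).const_mul _).congr_deriv ?_
  rw [Nat.descFactorial_succ, Nat.sub_sub]
  push_cast
  ring

theorem contDiffOn_tsum_mul_pow (ha : ∀ j, Summable fun k => (k.descFactorial j : ℝ) * ‖a k‖) :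
    ContDiffOn ℝ ∞ (fun z => ∑' k, a k * z ^ k) (Icc (-1) 1) := by
  have h0 : powerSeriesDeriv a 0 = fun z => ∑' k, a k * z ^ k := by
    ext z; simp [powerSeriesDeriv]
  exact h0 ▸ contDiffOn_of_hasDerivWithinAt_succ (uniqueDiffOn_Icc (by norm_num))
    fun j _ => hasDerivWithinAt_powerSeriesDeriv ha j

theorem tsum_mul_pow_pos {f : ℕ → ℝ} (hf0 : ∀ k, 0 ≤ f k) (hf1 : HasSum f 1) {z : ℝ}
    (hz : z ∈ Ioc 0 1) : 0 < ∑' k, f k * z ^ k := by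
  obtain ⟨k, hk⟩ : ∃ k, 0 < f k := by
    by_contra! h
    have : f = 0 := funext fun k => le_antisymm (h k) (hf0 k)
    exact one_ne_zero (hf1.unique (this ▸ hasSum_zero))
  refine Summable.tsum_pos ?_ (fun n => mul_nonneg (hf0 n) (pow_nonneg hz.1.le n)) k
    (mul_pos hk (pow_pos hz.1 k))
  exact hf1.summable.of_nonneg_of_le (fun n => mul_nonneg (hf0 n) (pow_nonneg hz.1.le n))
    fun n => mul_le_of_le_one_right (hf0 n) (pow_le_one₀ hz.1.le hz.2)

end PowerSeries

section ContractionSeries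

variable {c α : ℝ} {L : ℝ → ℝ} {r j : ℕ}

theorem one_sub_add_mul_mem_Icc_s5 {t z : ℝ} (ht0 : 0 ≤ t) (ht1 : t ≤ 1) (hz : z ∈ Icc c 1) :
    1 - t + t * z ∈ Icc c 1 :=
  ⟨by nlinarith [hz.1, hz.2], by nlinarith [hz.2]⟩

noncomputable def contractionSeriesDeriv (L : ℝ → ℝ) (c α : ℝ) (j : ℕ) (z : ℝ) : ℝ :=
  ∑' i : ℕ, (α ^ j) ^ i * iteratedDerivWithin j L (Icc c 1) (1 - α ^ i + α ^ i * z)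

theorem hasDerivWithinAt_iteratedDerivWithin_comp_contraction (hc : c < 1) (hα0 : 0 ≤ α)
    (hα1 : α ≤ 1) (hL : ContDiffOn ℝ r L (Icc c 1)) (hj : j < r) (i : ℕ) {z : ℝ}
    (hz : z ∈ Icc c 1) :
    HasDerivWithinAt
      (fun z => (α ^ j) ^ i * iteratedDerivWithin j L (Icc c 1) (1 - α ^ i + α ^ i * z))
      ((α ^ (j + 1)) ^ i * iteratedDerivWithin (j + 1) L (Icc c 1) (1 - α ^ i + α ^ i * z))
      (Icc c 1) z := by
  have hmaps : MapsTo (fun z => 1 - α ^ i + α ^ i * z) (Icc c 1) (Icc c 1) := fun z hz =>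
    one_sub_add_mul_mem_Icc_s5 (pow_nonneg hα0 i) (pow_le_one₀ hα0 hα1) hz
  have hinner : HasDerivWithinAt (fun z => 1 - α ^ i + α ^ i * z) (α ^ i) (Icc c 1) z := by
    simpa using ((hasDerivWithinAt_id z (Icc c 1)).const_mul (α ^ i)).const_add (1 - α ^ i)
  have houter := (hL.differentiableOn_iteratedDerivWithin (by exact_mod_cast hj)
    (uniqueDiffOn_Icc hc) _ (hmaps hz)).hasDerivWithinAt
  rw [← iteratedDerivWithin_succ] at houter
  refine ((houter.comp z hinner hmaps).const_mul ((α ^ j) ^ i)).congr_deriv ?_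
  dsimp only
  ring

theorem exists_summable_bound_iteratedDerivWithin_comp_contraction (hc : c < 1) (hα0 : 0 ≤ α)
    (hα1 : α < 1) (hL : ContDiffOn ℝ r L (Icc c 1)) (hj : j + 1 ≤ r) :
    ∃ u : ℕ → ℝ, Summable u ∧ ∀ i, ∀ x ∈ Icc c 1,
      ‖(α ^ (j + 1)) ^ i * iteratedDerivWithin (j + 1) L (Icc c 1) (1 - α ^ i + α ^ i * x)‖
        ≤ u i := by
  obtain ⟨C, hC⟩ := isCompact_Icc.exists_bound_of_continuousOn
    (hL.continuousOn_iteratedDerivWithin (by exact_mod_cast hj) (uniqueDiffOn_Icc hc))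
  have hαj : α ^ (j + 1) < 1 := pow_lt_one₀ hα0 hα1 j.succ_ne_zero
  refine ⟨fun i => (α ^ (j + 1)) ^ i * C,
    (summable_geometric_of_lt_one (by positivity) hαj).mul_right C, fun i x hx => ?_⟩
  rw [norm_mul, norm_pow, Real.norm_of_nonneg (by positivity)]
  exact mul_le_mul_of_nonneg_left (hC _ (one_sub_add_mul_mem_Icc_s5 (pow_nonneg hα0 i)
    (pow_le_one₀ hα0 hα1.le) hx)) (by positivity)

theorem summable_iteratedDerivWithin_comp_contraction_one (hα0 : 0 ≤ α) (hα1 : α < 1)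
    (hL1 : L 1 = 0) (j : ℕ) :
    Summable fun i : ℕ =>
      (α ^ j) ^ i * iteratedDerivWithin j L (Icc c 1) (1 - α ^ i + α ^ i * 1) := by
  simp only [mul_one, sub_add_cancel]
  rcases j with _ | j
  · simp [hL1]
  · exact (summable_geometric_of_lt_one (by positivity)
      (pow_lt_one₀ hα0 hα1 j.succ_ne_zero)).mul_right _

theorem summable_comp_contraction (hc : c < 1) (hα0 : 0 ≤ α) (hα1 : α < 1)
    (hL : ContDiffOn ℝ 1 L (Icc c 1)) (hL1 : L 1 = 0) {z : ℝ} (hz : z ∈ Icc c 1) :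
    Summable fun i : ℕ => L (1 - α ^ i + α ^ i * z) := by
  obtain ⟨u, hu, hbound⟩ :=
    exists_summable_bound_iteratedDerivWithin_comp_contraction (j := 0) hc hα0 hα1 hL le_rfl
  simpa using summable_of_summable_hasDerivWithinAt_of_convex (convex_Icc c 1) hu
    (fun i x hx => hasDerivWithinAt_iteratedDerivWithin_comp_contraction hc hα0 hα1.le hL
      zero_lt_one i hx) hbound (right_mem_Icc.2 hc.le)
    (summable_iteratedDerivWithin_comp_contraction_one hα0 hα1 hL1 0) hz

theorem hasDerivWithinAt_contractionSeriesDeriv (hc : c < 1) (hα0 : 0 ≤ α) (hα1 : α < 1)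
    (hL : ContDiffOn ℝ r L (Icc c 1)) (hL1 : L 1 = 0) (hj : j < r) {z : ℝ} (hz : z ∈ Icc c 1) :
    HasDerivWithinAt (contractionSeriesDeriv L c α j) (contractionSeriesDeriv L c α (j + 1) z)
      (Icc c 1) z := by
  obtain ⟨u, hu, hbound⟩ :=
    exists_summable_bound_iteratedDerivWithin_comp_contraction hc hα0 hα1 hL hj
  exact hasDerivWithinAt_tsum_of_convex (convex_Icc c 1) hu
    (fun i x hx => hasDerivWithinAt_iteratedDerivWithin_comp_contraction hc hα0 hα1.le hL hj i hx)
    hbound (right_mem_Icc.2 hc.le)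
    (summable_iteratedDerivWithin_comp_contraction_one hα0 hα1 hL1 j) hz

theorem iteratedDerivWithin_tsum_comp_contraction (hc : c < 1) (hα0 : 0 ≤ α) (hα1 : α < 1)
    (hL : ContDiffOn ℝ r L (Icc c 1)) (hL1 : L 1 = 0) (hr : r ≠ 0) :
    iteratedDerivWithin r (fun z => ∑' i : ℕ, L (1 - α ^ i + α ^ i * z)) (Icc c 1) 1 =
      iteratedDerivWithin r L (Icc c 1) 1 / (1 - α ^ r) := by
  have h0 : contractionSeriesDeriv L c α 0 = fun z => ∑' i : ℕ, L (1 - α ^ i + α ^ i * z) := by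
    ext z; simp [contractionSeriesDeriv]
  rw [← h0, eqOn_iteratedDerivWithin_of_hasDerivWithinAt_succ (uniqueDiffOn_Icc hc)
    (fun j hj z hz => hasDerivWithinAt_contractionSeriesDeriv hc hα0 hα1 hL hL1 hj hz)
    (right_mem_Icc.2 hc.le)]
  simp only [contractionSeriesDeriv, mul_one, sub_add_cancel]
  rw [tsum_mul_right, tsum_geometric_of_lt_one (by positivity) (pow_lt_one₀ hα0 hα1 hr),
    div_eq_inv_mul]

end ContractionSeries

theorem iteratedDerivWithin_Icc_right_endpoint_congr {E : Type*} [NormedAddCommGroup E]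
    [NormedSpace ℝ E] {a a' b : ℝ} (ha : a < b) (ha' : a' < b) (n : ℕ) (F : ℝ → E) :
    iteratedDerivWithin n F (Icc a b) b = iteratedDerivWithin n F (Icc a' b) b := by
  have hset : Icc a b =ᶠ[𝓝 b] Icc a' b := by
    filter_upwards [Ioi_mem_nhds ha, Ioi_mem_nhds ha'] with y (hy : a < y) (hy' : a' < y)
    exact propext ⟨fun h => ⟨hy'.le, h.2⟩, fun h => ⟨hy.le, h.2⟩⟩
  simp only [iteratedDerivWithin_eq_iteratedFDerivWithin, iteratedFDerivWithin_congr_set hset]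

theorem stmt_5_general (α : ℝ) (hα : α ∈ Set.Ioo (0 : ℝ) 1)
    (f : ℕ → ℝ) (hf0 : ∀ k, 0 ≤ f k) (hf1 : HasSum f 1)
    (hfacmom : ∀ r : ℕ, 1 ≤ r → Summable fun k : ℕ => (k.descFactorial r : ℝ) * f k)
    (Ψ : ℝ → ℝ) (hΨ : ∀ z, Ψ z = ∑' k : ℕ, f k * z ^ k)
    (φ : ℝ → ℝ) (hφ : ∀ z, φ z = ∏' i : ℕ, Ψ (1 - α ^ i + α ^ i * z)) :
    ∀ r : ℕ, 1 ≤ r →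
      iteratedDerivWithin r (fun z => Real.log (φ z)) (Set.Icc 0 1) 1 =
        iteratedDerivWithin r (fun z => Real.log (Ψ z)) (Set.Icc 0 1) 1 / (1 - α ^ r) := by
  intro r hr
  have hmom : ∀ j, Summable fun k => (k.descFactorial j : ℝ) * ‖f k‖ := by
    intro j
    simp only [Real.norm_of_nonneg (hf0 _)]
    rcases j with _ | j
    · simpa using hf1.summable
    · exact hfacmom _ j.succ_pos
  have hS : Icc (1 / 2 : ℝ) 1 ⊆ Icc (-1) 1 := Icc_subset_Icc (by norm_num) le_rfl
  have hΨpos : ∀ z ∈ Icc (1 / 2 : ℝ) 1, 0 < Ψ z := fun z hz =>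
    hΨ z ▸ tsum_mul_pow_pos hf0 hf1 ⟨by linarith [hz.1], hz.2⟩
  have hL : ContDiffOn ℝ ∞ (fun z => Real.log (Ψ z)) (Icc (1 / 2) 1) :=
    (((contDiffOn_tsum_mul_pow hmom).mono hS).congr fun z _ => hΨ z).log fun z hz =>
      (hΨpos z hz).ne'
  have hL1 : Real.log (Ψ 1) = 0 := by simp [hΨ, hf1.tsum_eq]
  have hlogφ : EqOn (fun z => Real.log (φ z))
      (fun z => ∑' i : ℕ, Real.log (Ψ (1 - α ^ i + α ^ i * z))) (Icc (1 / 2) 1) := fun z hz => by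
    dsimp only
    rw [hφ, ← Real.rexp_tsum_eq_tprod (fun i => hΨpos _ (one_sub_add_mul_mem_Icc_s5
      (pow_nonneg hα.1.le i) (pow_le_one₀ hα.1.le hα.2.le) hz))
      (summable_comp_contraction (by norm_num) hα.1.le hα.2 (contDiffOn_infty.1 hL 1) hL1 hz),
      Real.log_exp]
  rw [iteratedDerivWithin_Icc_right_endpoint_congr one_pos (by norm_num : (1 / 2 : ℝ) < 1),
    iteratedDerivWithin_Icc_right_endpoint_congr one_pos (by norm_num : (1 / 2 : ℝ) < 1),
    iteratedDerivWithin_congr hlogφ (right_mem_Icc.2 (by norm_num)),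
    iteratedDerivWithin_tsum_comp_contraction (by norm_num) hα.1.le hα.2
      (contDiffOn_infty.1 hL r) hL1 (by omega)]

/-- Let `α ∈ (0,1)` and let `f` be a pmf on `ℕ` all of whose factorial moments
are finite, with pgf `Ψ`, and let `φ(z) = ∏_{i=0}^∞ Ψ(1 − α^i + α^i z)` be the pgf of the
pmf `p`. Then for every `r ≥ 1` the `r`-th factorial cumulant of `p` equals
`κ_[r]^{(f)} / (1 − α^r)`, where the `r`-th factorial cumulant of a pmf with pgf `G` is the
`r`-th derivative at `z = 1` (taken within `[0,1]`) of `z ↦ ln G(z)`. -/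
theorem stmt_5 (α : ℝ) (hα : α ∈ Set.Ioo (0 : ℝ) 1)
    (f : ℕ → ℝ) (hf0 : ∀ k, 0 ≤ f k) (hf1 : HasSum f 1)
    (hfacmom : ∀ r : ℕ, 1 ≤ r → Summable fun k : ℕ => (k.descFactorial r : ℝ) * f k)
    (Ψ : ℝ → ℝ) (hΨ : ∀ z, Ψ z = ∑' k : ℕ, f k * z ^ k)
    (p : ℕ → ℝ) (hp0 : ∀ r, 0 ≤ p r) (hp1 : HasSum p 1)
    (φ : ℝ → ℝ) (hφ : ∀ z, φ z = ∏' i : ℕ, Ψ (1 - α ^ i + α ^ i * z))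
    (hppgf : ∀ z ∈ Set.Icc (0 : ℝ) 1, (∑' r : ℕ, p r * z ^ r) = φ z) :
    ∀ r : ℕ, 1 ≤ r →
      iteratedDerivWithin r (fun z => Real.log (φ z)) (Set.Icc 0 1) 1 =
        iteratedDerivWithin r (fun z => Real.log (Ψ z)) (Set.Icc 0 1) 1 / (1 - α ^ r) :=
  stmt_5_general α hα f hf0 hf1 hfacmom Ψ hΨ φ hφ
end

section
/- Let α, p ∈ (0,1), let Ψ(z) = ln(1 − p z)/ln(1 − p) be the pgf of the logarithmic(p) distribution, and for i ≥ 0 set q_i = p α^i / (1 − p(1 − α^i)) and b_i = 1 − ln(1 − q_i)/ln(1 − p). Then q_i ∈ (0,1), b_i ∈ [0,1), b_0 = 0, q_0 = p, and for every z ∈ [0,1], Ψ(1 − α^i + α^i z) = b_i + (1 − b_i) · ln(1 − q_i z)/ln(1 − q_i); equivalently, the pmf with pgf z ↦ Ψ(1 − α^i + α^i z) is the two-component mixture assigning probability b_i to the point 0 and probability (1 − b_i) · q_i^r / (−r ln(1 − q_i)) to each r ≥ 1. -/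
/-!
Thinning a logarithmic(p) variable by independent Bernoulli(a) marks has pgf
`z ↦ Ψ(1 - a + a z)`, and the whole proof rests on the factorisation
`1 - p (1 - a + a z) = (1 - p (1 - a)) (1 - q z)` with `q = p a / (1 - p (1 - a))`.
Taking logarithms splits `Ψ(1 - a + a z)` into the constant `b` plus a multiple of the
logarithmic(q) pgf, and the power series `-log (1 - x) = ∑ xʳ / r` gives the mixture's pmf.
-/

open Real Set

lemma hasSum_pow_div_nat {x : ℝ} (h : |x| < 1) :
    HasSum (fun r : ℕ => x ^ r / r) (-log (1 - x)) :=
  (hasSum_nat_add_iff' 1).mp (by simpa using hasSum_pow_div_log_of_abs_lt_one h)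

lemma hasSum_logarithmic_pgf {q z : ℝ} (h : |q * z| < 1) :
    HasSum (fun r : ℕ => q ^ r / (-(r : ℝ) * log (1 - q)) * z ^ r)
      (log (1 - q * z) / log (1 - q)) := by
  have h' := (hasSum_pow_div_nat h).mul_right (-(log (1 - q))⁻¹)
  rw [show -log (1 - q * z) * -(log (1 - q))⁻¹ = log (1 - q * z) / log (1 - q) by ring] at h'
  exact h'.congr_fun fun r => by ring

lemma hasSum_zero_inflated_logarithmic_pgf {b q z : ℝ} (h : |q * z| < 1) :
    HasSum
      (fun r : ℕ => (if r = 0 then b else (1 - b) * q ^ r / (-(r : ℝ) * log (1 - q))) * z ^ r)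
      (b + (1 - b) * (log (1 - q * z) / log (1 - q))) := by
  convert (hasSum_ite_eq 0 b).add ((hasSum_logarithmic_pgf h).mul_left (1 - b)) using 1
  funext r
  rcases r with _ | r
  · simp
  · simp only [Nat.add_one_ne_zero, if_false]
    ring

/-- The parameter `q` of the logarithmic component of a logarithmic(p) law thinned by `a`. -/
noncomputable def thinLogParam (p a : ℝ) : ℝ := p * a / (1 - p * (1 - a))

section thinLogParam

variable {p a : ℝ}

@[simp]
lemma thinLogParam_one (p : ℝ) : thinLogParam p 1 = p := by
  simp [thinLogParam]

lemma one_sub_mul_one_sub_pos (hp0 : 0 ≤ p) (hp1 : p < 1) (ha : 0 ≤ a) :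
    0 < 1 - p * (1 - a) := by
  nlinarith

lemma thinLogParam_mem_Ioo (hp : p ∈ Ioo 0 1) (ha : 0 < a) : thinLogParam p a ∈ Ioo 0 1 := by
  obtain ⟨hp0, hp1⟩ := hp
  have hd := one_sub_mul_one_sub_pos hp0.le hp1 ha.le
  refine ⟨by unfold thinLogParam; positivity, ?_⟩
  rw [thinLogParam, div_lt_one hd]
  linarith

lemma one_sub_thinLogParam (hd : 1 - p * (1 - a) ≠ 0) :
    1 - thinLogParam p a = (1 - p) / (1 - p * (1 - a)) := by
  rw [thinLogParam]
  field_simp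
  ring

lemma one_sub_mul_affine_eq (hd : 1 - p * (1 - a) ≠ 0) (z : ℝ) :
    1 - p * (1 - a + a * z) = (1 - p * (1 - a)) * (1 - thinLogParam p a * z) := by
  rw [thinLogParam]
  field_simp
  ring

lemma log_one_sub_thinLogParam (hp : p ∈ Ioo 0 1) (ha : 0 < a) :
    log (1 - thinLogParam p a) = log (1 - p) - log (1 - p * (1 - a)) := by
  have hd := one_sub_mul_one_sub_pos hp.1.le hp.2 ha.le
  rw [one_sub_thinLogParam hd.ne', log_div (by linarith [hp.2]) hd.ne']

/-- The mass `b` that the thinned law puts on `0`. -/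
noncomputable def thinLogZeroMass (p a : ℝ) : ℝ := 1 - log (1 - thinLogParam p a) / log (1 - p)

lemma thinLogZeroMass_mem_Ico (hp : p ∈ Ioo 0 1) (ha : a ∈ Ioc 0 1) :
    thinLogZeroMass p a ∈ Ico 0 1 := by
  obtain ⟨hp0, hp1⟩ := hp
  have hL : log (1 - p) < 0 := log_neg (by linarith) (by linarith)
  have hd := one_sub_mul_one_sub_pos hp0.le hp1 ha.1.le
  have hdL : log (1 - p) < log (1 - p * (1 - a)) := log_lt_log (by linarith) (by nlinarith [ha.1])
  have hdL' : log (1 - p * (1 - a)) ≤ 0 := log_nonpos hd.le (by nlinarith [ha.2])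
  rw [thinLogZeroMass, log_one_sub_thinLogParam ⟨hp0, hp1⟩ ha.1, sub_div, div_self hL.ne,
    sub_sub_cancel]
  exact ⟨div_nonneg_of_nonpos hdL' hL.le, (div_lt_one_of_neg hL).mpr hdL⟩

lemma thinLogZeroMass_one (hp : p ∈ Ioo 0 1) : thinLogZeroMass p 1 = 0 := by
  have hL : log (1 - p) ≠ 0 := (log_neg (sub_pos.2 hp.2) (by linarith [hp.1])).ne
  rw [thinLogZeroMass, thinLogParam_one, div_self hL, sub_self]

lemma log_one_sub_mul_affine_div_eq (hp : p ∈ Ioo 0 1) (ha : 0 < a) {z : ℝ} (hz : z ≤ 1) :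
    log (1 - p * (1 - a + a * z)) / log (1 - p) =
      thinLogZeroMass p a + (1 - thinLogZeroMass p a) *
        (log (1 - thinLogParam p a * z) / log (1 - thinLogParam p a)) := by
  obtain ⟨hq0, hq1⟩ := thinLogParam_mem_Ioo hp ha
  have hd := one_sub_mul_one_sub_pos hp.1.le hp.2 ha.le
  have hqz : thinLogParam p a * z < 1 := by nlinarith
  have hLq : log (1 - thinLogParam p a) ≠ 0 := (log_neg (by linarith) (by linarith)).ne
  have hL : log (1 - p) ≠ 0 := (log_neg (by linarith [hp.2]) (by linarith [hp.1])).ne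
  rw [thinLogZeroMass, one_sub_mul_affine_eq hd.ne', log_mul hd.ne' (by linarith),
    log_one_sub_thinLogParam hp ha]
  rw [log_one_sub_thinLogParam hp ha] at hLq
  field_simp
  ring

end thinLogParam

/-- Let `α, p ∈ (0,1)`, let `Ψ(z) = ln(1 − p z)/ln(1 − p)` be the pgf of the
logarithmic(p) distribution, and for `i ≥ 0` set `q_i = p α^i / (1 − p(1 − α^i))` and
`b_i = 1 − ln(1 − q_i)/ln(1 − p)`. Then `q_i ∈ (0,1)`, `b_i ∈ [0,1)`, `b_0 = 0`, `q_0 = p`,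
and for every `z ∈ [0,1]`,
`Ψ(1 − α^i + α^i z) = b_i + (1 − b_i)·ln(1 − q_i z)/ln(1 − q_i)`; equivalently, the pmf with
pgf `z ↦ Ψ(1 − α^i + α^i z)` is the mixture assigning probability `b_i` to `0` and
`(1 − b_i)·q_i^r/(−r ln(1 − q_i))` to each `r ≥ 1`. -/
theorem stmt_8 (α p : ℝ) (hα : α ∈ Set.Ioo (0 : ℝ) 1) (hp : p ∈ Set.Ioo (0 : ℝ) 1)
    (Ψ : ℝ → ℝ) (hΨ : ∀ z, Ψ z = Real.log (1 - p * z) / Real.log (1 - p))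
    (q b : ℕ → ℝ)
    (hq : ∀ i, q i = p * α ^ i / (1 - p * (1 - α ^ i)))
    (hb : ∀ i, b i = 1 - Real.log (1 - q i) / Real.log (1 - p)) :
    (∀ i, q i ∈ Set.Ioo (0 : ℝ) 1) ∧ (∀ i, b i ∈ Set.Ico (0 : ℝ) 1) ∧
    b 0 = 0 ∧ q 0 = p ∧
    (∀ i, ∀ z ∈ Set.Icc (0 : ℝ) 1,
      Ψ (1 - α ^ i + α ^ i * z) =
        b i + (1 - b i) * (Real.log (1 - q i * z) / Real.log (1 - q i))) ∧
    (∀ i, ∀ z ∈ Set.Icc (0 : ℝ) 1,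
      HasSum
        (fun r : ℕ =>
          (if r = 0 then b i else (1 - b i) * (q i) ^ r / (-(r : ℝ) * Real.log (1 - q i)))
            * z ^ r)
        (Ψ (1 - α ^ i + α ^ i * z))) := by
  obtain rfl : q = fun i => thinLogParam p (α ^ i) := funext hq
  obtain rfl : b = fun i => thinLogZeroMass p (α ^ i) := funext hb
  obtain rfl : Ψ = fun z => log (1 - p * z) / log (1 - p) := funext hΨ
  beta_reduce
  have hαi (i : ℕ) : α ^ i ∈ Ioc 0 1 := ⟨pow_pos hα.1 i, pow_le_one₀ hα.1.le hα.2.le⟩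
  have hpgf (i : ℕ) (z : ℝ) (hz : z ∈ Icc 0 1) :=
    log_one_sub_mul_affine_div_eq hp (hαi i).1 hz.2
  refine ⟨fun i => thinLogParam_mem_Ioo hp (hαi i).1,
    fun i => thinLogZeroMass_mem_Ico hp (hαi i), by simpa using thinLogZeroMass_one hp, by simp,
    hpgf, fun i z hz => ?_⟩
  obtain ⟨hq0, hq1⟩ := thinLogParam_mem_Ioo hp (hαi i).1
  rw [hpgf i z hz]
  refine hasSum_zero_inflated_logarithmic_pgf ?_
  rw [abs_of_nonneg (mul_nonneg hq0.le hz.1)]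
  nlinarith [hz.2]
end

section
/- Let α, p ∈ (0,1), let Ψ(z) = ln(1 − p z)/ln(1 − p) be the pgf of the logarithmic(p) distribution, and for i ≥ 0 set q_i = p α^i / (1 − p(1 − α^i)). Then the marginal pgf φ(z) = ∏_{i=0}^∞ Ψ(1 − α^i + α^i z) of the stationary INAR(1) process with logarithmic(p) innovations admits, for every z ∈ [0,1], the representation φ(z) = ∏_{i=0}^∞ [ 1 − (1/ln(1−p)) · ln( (1 − q_i) / (1 − q_i z) ) ]. -/
/-!
Factor by factor: with `D = 1 − p(1 − a)` and `q = p a / D`, one has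
`1 − p(1 − a + a z) = D (1 − q z)` and `1 − q = (1 − p)/D`, so taking logarithms
`ln(1 − p(1 − a + a z)) = ln(1 − p) − ln((1 − q)/(1 − q z))`. Dividing by `ln(1 − p)` turns each
factor `Ψ(1 − αⁱ + αⁱ z)` of `φ` into the corresponding factor of the claimed product.
-/

namespace Real

variable {p a z q : ℝ}

lemma one_sub_mul_one_sub_pos (hp0 : 0 ≤ p) (hp1 : p < 1) (ha : 0 ≤ a) :
    0 < 1 - p * (1 - a) := by
  nlinarith [mul_nonneg hp0 ha]

lemma div_one_sub_mul_one_sub_mem_Ico (hp0 : 0 ≤ p) (hp1 : p < 1) (ha : 0 ≤ a) :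
    p * a / (1 - p * (1 - a)) ∈ Set.Ico 0 1 := by
  have hD := one_sub_mul_one_sub_pos hp0 hp1 ha
  exact ⟨by positivity, (div_lt_one hD).2 (by linarith)⟩

lemma one_sub_div_one_sub_mul_one_sub (hD : 1 - p * (1 - a) ≠ 0) :
    1 - p * a / (1 - p * (1 - a)) = (1 - p) / (1 - p * (1 - a)) := by
  field_simp
  ring

lemma one_sub_mul_thinning (hD : 1 - p * (1 - a) ≠ 0) :
    1 - p * (1 - a + a * z) = (1 - p * (1 - a)) * (1 - p * a / (1 - p * (1 - a)) * z) := by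
  field_simp
  ring

lemma log_one_sub_mul_thinning (hq : q = p * a / (1 - p * (1 - a)))
    (hp : 1 - p ≠ 0) (hD : 1 - p * (1 - a) ≠ 0) (hqz : 1 - q * z ≠ 0) :
    log (1 - p * (1 - a + a * z)) = log (1 - p) - log ((1 - q) / (1 - q * z)) := by
  subst hq
  rw [one_sub_mul_thinning hD, one_sub_div_one_sub_mul_one_sub hD, log_mul hD hqz,
    log_div (div_ne_zero hp hD) hqz, log_div hp hD]
  ring

end Real

/-- Let `α, p ∈ (0,1)`, let `Ψ(z) = ln(1 − p z)/ln(1 − p)` be the pgf of the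
logarithmic(p) distribution, and for `i ≥ 0` set `q_i = p α^i / (1 − p(1 − α^i))`. Then the
marginal pgf `φ(z) = ∏_{i=0}^∞ Ψ(1 − α^i + α^i z)` of the stationary INAR(1) process with
logarithmic(p) innovations satisfies, for every `z ∈ [0,1]`,
`φ(z) = ∏_{i=0}^∞ [1 − (1/ln(1−p))·ln((1 − q_i)/(1 − q_i z))]`. -/
theorem stmt_9 (α p : ℝ) (hα : α ∈ Set.Ioo (0 : ℝ) 1) (hp : p ∈ Set.Ioo (0 : ℝ) 1)
    (Ψ : ℝ → ℝ) (hΨ : ∀ z, Ψ z = Real.log (1 - p * z) / Real.log (1 - p))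
    (q : ℕ → ℝ) (hq : ∀ i, q i = p * α ^ i / (1 - p * (1 - α ^ i)))
    (φ : ℝ → ℝ) (hφ : ∀ z, φ z = ∏' i : ℕ, Ψ (1 - α ^ i + α ^ i * z)) :
    ∀ z ∈ Set.Icc (0 : ℝ) 1,
      φ z = ∏' i : ℕ,
        (1 - (1 / Real.log (1 - p)) * Real.log ((1 - q i) / (1 - q i * z))) := by
  intro z hz
  have hL : Real.log (1 - p) ≠ 0 := (Real.log_neg (by linarith [hp.2]) (by linarith [hp.1])).ne
  rw [hφ z]
  refine tprod_congr fun i => ?_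
  have ha : 0 ≤ α ^ i := pow_nonneg hα.1.le i
  have hD := Real.one_sub_mul_one_sub_pos hp.1.le hp.2 ha
  have hqi := Real.div_one_sub_mul_one_sub_mem_Ico hp.1.le hp.2 ha
  rw [← hq i] at hqi
  have hqz : 1 - q i * z ≠ 0 := by nlinarith [hqi.1, hqi.2, hz.2]
  rw [hΨ, Real.log_one_sub_mul_thinning (hq i) (by linarith [hp.2]) hD.ne' hqz]
  field_simp
end

section
/- Let α, p ∈ (0,1). For r ≥ 0 define p_r = ∑_{k=r}^∞ (−1)^{k−r} C(k,r) · p^k α^{k(k−1)/2} / ∏_{l=1}^{k} (1 − α^l). Then each series defining p_r converges absolutely, p_r ≥ 0 for all r, ∑_{r=0}^∞ p_r = 1, and for every z ∈ [0,1], ∑_{r=0}^∞ p_r z^r = ∏_{i=0}^∞ (1 − p α^i (1 − z)). In other words, (p_r) is the marginal pmf of the stationary INAR(1) process with Bernoulli(p) innovations, obtained as the weak limit of the Poissonian Binomial(n, α, p) distributions as n → ∞. -/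
/-!
Write `e(c, k) = c^k α^(k(k-1)/2) / ∏_{l=1}^k (1 - α^l)` and `p_r(c)` for the series with `p`
replaced by `c`. The identity `e(c, k+1) - e(cα, k+1) = c e(cα, k)` and Pascal's rule give
`p_r(c) = (1 - c) p_r(cα) + c p_{r-1}(cα)`: the law `p(c)` is the law `p(cα)` convolved with a
Bernoulli(c). Hence the generating function satisfies
`G(c, z) = (1 - c(1 - z)) G(cα, z) = ∏_{i<n} (1 - cα^i(1 - z)) G(cα^n, z)`, and
`G(cα^n, z) → G(0, z) = 1` because `G` is continuous in `c`. Nonnegativity follows by induction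
on `r`: the recurrence gives `p_r(c) ≥ (1 - c) p_r(cα)`, so a negative value at `c` would persist
along `cα^n → 0`, against `p_r(0) = 0^r`. All estimates rest on `C(k, r) ≤ 2^k` and
`e(c, m + r) ≤ e(c, m) e(c, r)`.
-/

open Finset Filter Topology

namespace BernoulliINAR

variable {α : ℝ}

lemma choose_two_succ (k : ℕ) : (k + 1).choose 2 = k.choose 2 + k := by
  rw [Nat.choose_succ_succ', Nat.choose_one_right, add_comm]

lemma choose_two_add_le (m r : ℕ) : m.choose 2 + r.choose 2 ≤ (m + r).choose 2 := by
  induction m with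
  | zero => simp
  | succ m ih =>
    rw [Nat.add_right_comm, choose_two_succ, choose_two_succ]
    omega

noncomputable def qPochhammer (α : ℝ) (k : ℕ) : ℝ := ∏ l ∈ range k, (1 - α ^ (l + 1))

lemma qPochhammer_succ (α : ℝ) (k : ℕ) :
    qPochhammer α (k + 1) = qPochhammer α k * (1 - α ^ (k + 1)) :=
  prod_range_succ _ _

lemma one_sub_pow_succ_pos (hα0 : 0 ≤ α) (hα1 : α < 1) (l : ℕ) : 0 < 1 - α ^ (l + 1) :=
  sub_pos.2 (pow_lt_one₀ hα0 hα1 l.succ_ne_zero)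

lemma qPochhammer_pos (hα0 : 0 ≤ α) (hα1 : α < 1) (k : ℕ) : 0 < qPochhammer α k :=
  prod_pos fun l _ => one_sub_pow_succ_pos hα0 hα1 l

lemma qPochhammer_mul_le_add (hα0 : 0 ≤ α) (hα1 : α < 1) (m r : ℕ) :
    qPochhammer α m * qPochhammer α r ≤ qPochhammer α (m + r) := by
  rw [qPochhammer, qPochhammer, qPochhammer, add_comm m, prod_range_add, mul_comm]
  refine mul_le_mul_of_nonneg_left (prod_le_prod (fun l _ => (one_sub_pow_succ_pos hα0 hα1 l).le)
    fun l _ => ?_) (qPochhammer_pos hα0 hα1 r).le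
  exact sub_le_sub_left (pow_le_pow_of_le_one hα0 hα1.le (by omega)) 1

noncomputable def eulerCoeff (α c : ℝ) (k : ℕ) : ℝ := c ^ k * α ^ k.choose 2 / qPochhammer α k

lemma eulerCoeff_zero_left (α : ℝ) (k : ℕ) : eulerCoeff α 0 k = 0 ^ k := by
  cases k <;> simp [eulerCoeff, qPochhammer]

lemma eulerCoeff_mul_pow (α c x : ℝ) (k : ℕ) :
    eulerCoeff α c k * x ^ k = eulerCoeff α (c * x) k := by
  simp only [eulerCoeff, mul_pow]
  ring

lemma eulerCoeff_nonneg (hα0 : 0 ≤ α) (hα1 : α < 1) {c : ℝ} (hc : 0 ≤ c) (k : ℕ) :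
    0 ≤ eulerCoeff α c k :=
  div_nonneg (by positivity) (qPochhammer_pos hα0 hα1 k).le

lemma abs_eulerCoeff (hα0 : 0 ≤ α) (hα1 : α < 1) (c : ℝ) (k : ℕ) :
    |eulerCoeff α c k| = eulerCoeff α |c| k := by
  rw [eulerCoeff, eulerCoeff, abs_div, abs_mul, abs_pow, abs_pow, abs_of_nonneg hα0,
    abs_of_pos (qPochhammer_pos hα0 hα1 k)]

lemma eulerCoeff_le_of_le (hα0 : 0 ≤ α) (hα1 : α < 1) {c b : ℝ} (hc : 0 ≤ c) (hcb : c ≤ b)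
    (k : ℕ) : eulerCoeff α c k ≤ eulerCoeff α b k := by
  have := qPochhammer_pos hα0 hα1 k
  unfold eulerCoeff
  gcongr

lemma eulerCoeff_add_le (hα0 : 0 ≤ α) (hα1 : α < 1) {c : ℝ} (hc : 0 ≤ c) (m r : ℕ) :
    eulerCoeff α c (m + r) ≤ eulerCoeff α c m * eulerCoeff α c r := by
  have hm := qPochhammer_pos hα0 hα1 m
  have hr := qPochhammer_pos hα0 hα1 r
  calc eulerCoeff α c (m + r)
      ≤ c ^ (m + r) * α ^ (m.choose 2 + r.choose 2) / (qPochhammer α m * qPochhammer α r) := by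
        unfold eulerCoeff
        gcongr ?_ * ?_ / ?_
        · exact pow_le_pow_of_le_one hα0 hα1.le (choose_two_add_le m r)
        · exact qPochhammer_mul_le_add hα0 hα1 m r
    _ = eulerCoeff α c m * eulerCoeff α c r := by
        rw [eulerCoeff, eulerCoeff, pow_add, pow_add]
        field_simp

lemma eulerCoeff_succ (hα0 : 0 ≤ α) (hα1 : α < 1) (c : ℝ) (k : ℕ) :
    eulerCoeff α c (k + 1) = c * α ^ k / (1 - α ^ (k + 1)) * eulerCoeff α c k := by
  have := one_sub_pow_succ_pos hα0 hα1 k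
  have := qPochhammer_pos hα0 hα1 k
  rw [eulerCoeff, eulerCoeff, qPochhammer_succ, choose_two_succ, pow_succ, pow_add]
  field_simp

lemma eulerCoeff_succ_sub (hα0 : 0 ≤ α) (hα1 : α < 1) (c : ℝ) (k : ℕ) :
    eulerCoeff α c (k + 1) - eulerCoeff α (c * α) (k + 1) = c * eulerCoeff α (c * α) k := by
  have := one_sub_pow_succ_pos hα0 hα1 k
  have := qPochhammer_pos hα0 hα1 k
  rw [eulerCoeff, eulerCoeff, eulerCoeff, qPochhammer_succ, choose_two_succ, mul_pow, mul_pow,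
    pow_add]
  field_simp
  ring

lemma summable_eulerCoeff (hα0 : 0 ≤ α) (hα1 : α < 1) (c : ℝ) : Summable (eulerCoeff α c) := by
  have hratio : Tendsto (fun k : ℕ => |c| * α ^ k / (1 - α)) atTop (𝓝 0) := by
    simpa using ((tendsto_pow_atTop_nhds_zero_of_lt_one hα0 hα1).const_mul |c|).div_const (1 - α)
  refine summable_of_ratio_norm_eventually_le one_half_lt_one ?_
  filter_upwards [hratio.eventually_le_const one_half_pos] with k hk
  rw [eulerCoeff_succ hα0 hα1, norm_mul]
  gcongr
  calc ‖c * α ^ k / (1 - α ^ (k + 1))‖ = |c| * α ^ k / (1 - α ^ (k + 1)) := by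
        rw [Real.norm_eq_abs, abs_div, abs_mul, abs_pow, abs_of_nonneg hα0,
          abs_of_pos (one_sub_pow_succ_pos hα0 hα1 k)]
    _ ≤ |c| * α ^ k / (1 - α) := by
        gcongr _ / (1 - ?_)
        exact pow_le_of_le_one hα0 hα1.le k.succ_ne_zero
    _ ≤ 1 / 2 := hk

lemma continuous_tsum_of_locally_bounded {f : ℕ → ℝ → ℝ} (hf : ∀ n, Continuous (f n))
    (hbound : ∀ b, ∃ u : ℕ → ℝ, Summable u ∧ ∀ n x, |x| ≤ b → ‖f n x‖ ≤ u n) :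
    Continuous fun x => ∑' n, f n x := by
  refine continuous_iff_continuousAt.2 fun x => ?_
  obtain ⟨u, hu, hfu⟩ := hbound (|x| + 1)
  refine (continuousOn_tsum (fun n => (hf n).continuousOn) hu fun n y hy => hfu n y
    (abs_le.2 hy)).continuousAt (Icc_mem_nhds ?_ ?_)
  · linarith [neg_abs_le x]
  · linarith [le_abs_self x]

noncomputable def pmfTerm (α c : ℝ) (r m : ℕ) : ℝ :=
  (-1) ^ m * (m + r).choose r * eulerCoeff α c (m + r)

noncomputable def stationaryPmf (α c : ℝ) (r : ℕ) : ℝ := ∑' m, pmfTerm α c r m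

lemma abs_pmfTerm_le (hα0 : 0 ≤ α) (hα1 : α < 1) {c b : ℝ} (hcb : |c| ≤ b) (r m : ℕ) :
    |pmfTerm α c r m| ≤ eulerCoeff α (2 * b) r * eulerCoeff α (2 * b) m := by
  have hb : 0 ≤ 2 * b := by linarith [abs_nonneg c]
  calc |pmfTerm α c r m| = (m + r).choose r * eulerCoeff α |c| (m + r) := by
        rw [pmfTerm, abs_mul, abs_mul, abs_pow, abs_neg, abs_one, one_pow, one_mul,
          Nat.abs_cast, abs_eulerCoeff hα0 hα1]
    _ ≤ 2 ^ (m + r) * eulerCoeff α b (m + r) := by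
        gcongr
        · exact eulerCoeff_nonneg hα0 hα1 (abs_nonneg c) _
        · exact_mod_cast Nat.choose_le_two_pow _ _
        · exact eulerCoeff_le_of_le hα0 hα1 (abs_nonneg c) hcb _
    _ = eulerCoeff α (2 * b) (m + r) := by rw [mul_comm, eulerCoeff_mul_pow, mul_comm b]
    _ ≤ eulerCoeff α (2 * b) r * eulerCoeff α (2 * b) m :=
        (eulerCoeff_add_le hα0 hα1 hb m r).trans_eq (mul_comm _ _)

lemma summable_abs_pmfTerm (hα0 : 0 ≤ α) (hα1 : α < 1) (c : ℝ) (r : ℕ) :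
    Summable fun m => |pmfTerm α c r m| :=
  .of_nonneg_of_le (fun _ => abs_nonneg _) (abs_pmfTerm_le hα0 hα1 le_rfl r)
    ((summable_eulerCoeff hα0 hα1 _).mul_left _)

lemma summable_pmfTerm (hα0 : 0 ≤ α) (hα1 : α < 1) (c : ℝ) (r : ℕ) :
    Summable (pmfTerm α c r) :=
  (summable_abs_pmfTerm hα0 hα1 c r).of_abs

lemma abs_stationaryPmf_le (hα0 : 0 ≤ α) (hα1 : α < 1) {c b : ℝ} (hcb : |c| ≤ b) (r : ℕ) :
    |stationaryPmf α c r| ≤ eulerCoeff α (2 * b) r * ∑' m, eulerCoeff α (2 * b) m :=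
  tsum_of_norm_bounded (f := pmfTerm α c r) ((summable_eulerCoeff hα0 hα1 _).hasSum.mul_left _)
    (abs_pmfTerm_le hα0 hα1 hcb r)

lemma stationaryPmf_zero_left (α : ℝ) (r : ℕ) : stationaryPmf α 0 r = 0 ^ r := by
  rw [stationaryPmf, tsum_eq_single 0 fun m hm => ?_]
  · simp [pmfTerm, eulerCoeff_zero_left]
  · simp [pmfTerm, eulerCoeff_zero_left, hm]

lemma continuous_stationaryPmf (hα0 : 0 ≤ α) (hα1 : α < 1) (r : ℕ) :
    Continuous fun c => stationaryPmf α c r := by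
  refine continuous_tsum_of_locally_bounded (fun m => ?_) fun b =>
    ⟨_, (summable_eulerCoeff hα0 hα1 _).mul_left _, fun m c hcb => abs_pmfTerm_le hα0 hα1 hcb r m⟩
  unfold pmfTerm eulerCoeff
  fun_prop

lemma stationaryPmf_zero_eq_one_sub_mul (hα0 : 0 ≤ α) (hα1 : α < 1) (c : ℝ) :
    stationaryPmf α c 0 = (1 - c) * stationaryPmf α (c * α) 0 := by
  have hdiff : ∀ m, pmfTerm α c 0 (m + 1) - pmfTerm α (c * α) 0 (m + 1)
      = -c * pmfTerm α (c * α) 0 m := fun m => by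
    simp only [pmfTerm, add_zero, Nat.choose_zero_right, Nat.cast_one]
    linear_combination (-1 : ℝ) ^ (m + 1) * eulerCoeff_succ_sub hα0 hα1 c m
  have h0 : pmfTerm α c 0 0 - pmfTerm α (c * α) 0 0 = 0 := by simp [pmfTerm, eulerCoeff]
  have hf := summable_pmfTerm hα0 hα1 c 0
  have hg := summable_pmfTerm hα0 hα1 (c * α) 0
  have h := (hf.sub hg).tsum_eq_zero_add
  simp only [hdiff, tsum_mul_left, h0, hf.tsum_sub hg] at h
  rw [stationaryPmf, stationaryPmf]
  linarith

lemma stationaryPmf_succ (hα0 : 0 ≤ α) (hα1 : α < 1) (c : ℝ) (r : ℕ) :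
    stationaryPmf α c (r + 1)
      = (1 - c) * stationaryPmf α (c * α) (r + 1) + c * stationaryPmf α (c * α) r := by
  have hdiff0 : pmfTerm α c (r + 1) 0 - pmfTerm α (c * α) (r + 1) 0
      = c * pmfTerm α (c * α) r 0 := by
    simp only [pmfTerm, pow_zero, zero_add, Nat.choose_self, Nat.cast_one, one_mul]
    exact eulerCoeff_succ_sub hα0 hα1 c r
  have hdiff : ∀ m, pmfTerm α c (r + 1) (m + 1) - pmfTerm α (c * α) (r + 1) (m + 1)
      = c * (pmfTerm α (c * α) r (m + 1) - pmfTerm α (c * α) (r + 1) m) := fun m => by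
    simp only [pmfTerm, show m + 1 + (r + 1) = m + r + 1 + 1 by omega,
      show m + 1 + r = m + r + 1 by omega, show m + (r + 1) = m + r + 1 by omega]
    rw [Nat.choose_succ_succ' (m + r + 1) r, Nat.cast_add]
    linear_combination (-1 : ℝ) ^ (m + 1) * (((m + r + 1).choose r : ℝ)
      + (m + r + 1).choose (r + 1)) * eulerCoeff_succ_sub hα0 hα1 c (m + r + 1)
  have hf := summable_pmfTerm hα0 hα1 c (r + 1)
  have hg := summable_pmfTerm hα0 hα1 (c * α) (r + 1)
  have hg' := summable_pmfTerm hα0 hα1 (c * α) r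
  have h := (hf.sub hg).tsum_eq_zero_add
  simp only [hdiff0, hdiff, tsum_mul_left, hf.tsum_sub hg,
    ((summable_nat_add_iff 1).2 hg').tsum_sub hg] at h
  rw [stationaryPmf, stationaryPmf, stationaryPmf, hg'.tsum_eq_zero_add]
  linarith

lemma nonneg_of_one_sub_mul_le {f : ℝ → ℝ} {α c : ℝ} (hα0 : 0 ≤ α) (hα1 : α < 1) (hc0 : 0 ≤ c)
    (hc1 : c < 1) (hf : ContinuousAt f 0) (hf0 : 0 ≤ f 0)
    (hrec : ∀ x ∈ Set.Icc 0 c, (1 - x) * f (x * α) ≤ f x) : 0 ≤ f c := by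
  by_contra! hneg
  have horbit : ∀ n : ℕ, f (c * α ^ n) ≤ f c := by
    intro n
    induction n with
    | zero => simp
    | succ n ih =>
      have hx0 : 0 ≤ c * α ^ n := by positivity
      have hxc : c * α ^ n ≤ c := mul_le_of_le_one_right hc0 (pow_le_one₀ hα0 hα1.le)
      have h := hrec _ ⟨hx0, hxc⟩
      rw [mul_assoc, ← pow_succ] at h
      nlinarith
  have hlim : Tendsto (fun n : ℕ => f (c * α ^ n)) atTop (𝓝 (f 0)) :=
    hf.tendsto.comp (by simpa using (tendsto_pow_atTop_nhds_zero_of_lt_one hα0 hα1).const_mul c)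
  linarith [le_of_tendsto' hlim horbit]

lemma stationaryPmf_nonneg (hα0 : 0 ≤ α) (hα1 : α < 1) (r : ℕ) {c : ℝ} (hc0 : 0 ≤ c)
    (hc1 : c < 1) : 0 ≤ stationaryPmf α c r := by
  induction r generalizing c with
  | zero =>
    refine nonneg_of_one_sub_mul_le hα0 hα1 hc0 hc1
      (continuous_stationaryPmf hα0 hα1 0).continuousAt (by simp [stationaryPmf_zero_left])
      fun x _ => (stationaryPmf_zero_eq_one_sub_mul hα0 hα1 x).ge
  | succ r ih =>
    refine nonneg_of_one_sub_mul_le hα0 hα1 hc0 hc1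
      (continuous_stationaryPmf hα0 hα1 _).continuousAt (by simp [stationaryPmf_zero_left])
      fun x ⟨hx0, hxc⟩ => ?_
    have hxα : x * α < 1 := by nlinarith
    rw [stationaryPmf_succ hα0 hα1 x r]
    nlinarith [ih (mul_nonneg hx0 hα0) hxα]

noncomputable def stationaryPgf (α c z : ℝ) : ℝ := ∑' r, stationaryPmf α c r * z ^ r

lemma abs_stationaryPmf_mul_pow_le (hα0 : 0 ≤ α) (hα1 : α < 1) {c b : ℝ} (hcb : |c| ≤ b)
    (z : ℝ) (r : ℕ) :
    |stationaryPmf α c r * z ^ r|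
      ≤ (∑' m, eulerCoeff α (2 * b) m) * eulerCoeff α (2 * b * |z|) r := by
  have hM : 0 ≤ ∑' m, eulerCoeff α (2 * b) m :=
    tsum_nonneg (eulerCoeff_nonneg hα0 hα1 (by linarith [abs_nonneg c]))
  rw [abs_mul, abs_pow, ← eulerCoeff_mul_pow, ← mul_assoc, mul_comm (∑' m, _)]
  gcongr
  exact abs_stationaryPmf_le hα0 hα1 hcb r

lemma summable_stationaryPmf_mul_pow (hα0 : 0 ≤ α) (hα1 : α < 1) (c z : ℝ) :
    Summable fun r => stationaryPmf α c r * z ^ r :=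
  .of_norm_bounded ((summable_eulerCoeff hα0 hα1 _).mul_left _)
    (abs_stationaryPmf_mul_pow_le hα0 hα1 le_rfl z)

lemma continuous_stationaryPgf (hα0 : 0 ≤ α) (hα1 : α < 1) (z : ℝ) :
    Continuous fun c => stationaryPgf α c z :=
  continuous_tsum_of_locally_bounded
    (fun r => (continuous_stationaryPmf hα0 hα1 r).mul continuous_const) fun _ =>
    ⟨_, (summable_eulerCoeff hα0 hα1 _).mul_left _,
      fun r _ hcb => abs_stationaryPmf_mul_pow_le hα0 hα1 hcb z r⟩

lemma stationaryPgf_zero_left (α z : ℝ) : stationaryPgf α 0 z = 1 := by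
  rw [stationaryPgf, tsum_eq_single 0 fun r hr => by simp [stationaryPmf_zero_left, hr]]
  simp [stationaryPmf_zero_left]

lemma stationaryPgf_eq_one_sub_mul (hα0 : 0 ≤ α) (hα1 : α < 1) (c z : ℝ) :
    stationaryPgf α c z = (1 - c * (1 - z)) * stationaryPgf α (c * α) z := by
  have hs := summable_stationaryPmf_mul_pow hα0 hα1 (c * α) z
  have hshift : ∀ r, stationaryPmf α c (r + 1) * z ^ (r + 1)
      = (1 - c) * (stationaryPmf α (c * α) (r + 1) * z ^ (r + 1))
        + c * z * (stationaryPmf α (c * α) r * z ^ r) := fun r => by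
    rw [stationaryPmf_succ hα0 hα1, pow_succ]
    ring
  rw [stationaryPgf, (summable_stationaryPmf_mul_pow hα0 hα1 c z).tsum_eq_zero_add,
    tsum_congr hshift, (((summable_nat_add_iff 1).2 hs).mul_left _).tsum_add (hs.mul_left _),
    tsum_mul_left, tsum_mul_left, stationaryPmf_zero_eq_one_sub_mul hα0 hα1, stationaryPgf,
    hs.tsum_eq_zero_add]
  ring

lemma stationaryPgf_eq_prod_mul (hα0 : 0 ≤ α) (hα1 : α < 1) (c z : ℝ) (n : ℕ) :
    stationaryPgf α c z
      = (∏ i ∈ range n, (1 - c * α ^ i * (1 - z))) * stationaryPgf α (c * α ^ n) z := by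
  induction n with
  | zero => simp
  | succ n ih =>
    rw [ih, stationaryPgf_eq_one_sub_mul hα0 hα1 (c * α ^ n), prod_range_succ, pow_succ,
      ← mul_assoc c (α ^ n) α]
    ring

lemma hasProd_stationaryPgf (hα0 : 0 ≤ α) (hα1 : α < 1) (c z : ℝ) :
    HasProd (fun i => 1 - c * α ^ i * (1 - z)) (stationaryPgf α c z) := by
  have hmult : Multipliable fun i => 1 - c * α ^ i * (1 - z) := by
    convert Real.multipliable_one_add_of_summable
      ((summable_geometric_of_lt_one hα0 hα1).mul_left (-(c * (1 - z)))) using 2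
    ring
  have htail : Tendsto (fun n : ℕ => stationaryPgf α (c * α ^ n) z) atTop (𝓝 1) := by
    rw [← stationaryPgf_zero_left α z]
    exact (continuous_stationaryPgf hα0 hα1 z).tendsto 0 |>.comp
      (by simpa using (tendsto_pow_atTop_nhds_zero_of_lt_one hα0 hα1).const_mul c)
  have hpartial : Tendsto (fun n => ∏ i ∈ range n, (1 - c * α ^ i * (1 - z))) atTop
      (𝓝 (stationaryPgf α c z)) := by
    have hquot := (tendsto_const_nhds (x := stationaryPgf α c z)).div htail one_ne_zero
    rw [div_one] at hquot
    refine hquot.congr' ?_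
    filter_upwards [htail.eventually_ne one_ne_zero] with n hn
    simp only [Pi.div_apply]
    rw [stationaryPgf_eq_prod_mul hα0 hα1 c z n, mul_div_cancel_right₀ _ hn]
  exact (hmult.hasProd_iff_tendsto_nat).2 hpartial

end BernoulliINAR

open BernoulliINAR in
/-- Let `α, p ∈ (0,1)`. For `r ≥ 0` define
`p_r = ∑_{k=r}^∞ (−1)^{k−r} C(k,r) p^k α^{k(k−1)/2} / ∏_{l=1}^{k} (1 − α^l)`
(here indexed by `k = m + r`, `m ∈ ℕ`). Then each defining series converges absolutely,
`p_r ≥ 0`, `∑_r p_r = 1`, and `∑_r p_r z^r = ∏_{i=0}^∞ (1 − p α^i (1 − z))` for `z ∈ [0,1]`: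
`(p_r)` is the marginal pmf of the stationary INAR(1) process with Bernoulli(p)
innovations. -/
theorem stmt_10 (α p : ℝ) (hα : α ∈ Set.Ioo (0 : ℝ) 1) (hp : p ∈ Set.Ioo (0 : ℝ) 1)
    (pr : ℕ → ℝ)
    (hpr : ∀ r, pr r = ∑' m : ℕ,
      (-1 : ℝ) ^ m * ((m + r).choose r : ℝ) * p ^ (m + r)
        * α ^ ((m + r) * (m + r - 1) / 2)
        / ∏ l ∈ Finset.range (m + r), (1 - α ^ (l + 1))) :
    (∀ r, Summable fun m : ℕ =>
      |(-1 : ℝ) ^ m * ((m + r).choose r : ℝ) * p ^ (m + r)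
        * α ^ ((m + r) * (m + r - 1) / 2)
        / ∏ l ∈ Finset.range (m + r), (1 - α ^ (l + 1))|) ∧
    (∀ r, 0 ≤ pr r) ∧ HasSum pr 1 ∧
    (∀ z ∈ Set.Icc (0 : ℝ) 1,
      (∑' r : ℕ, pr r * z ^ r) = ∏' i : ℕ, (1 - p * α ^ i * (1 - z))) := by
  obtain ⟨hα0, hα1⟩ := hα
  obtain ⟨hp0, hp1⟩ := hp
  have hterm : ∀ r m : ℕ, (-1 : ℝ) ^ m * ((m + r).choose r : ℝ) * p ^ (m + r)
      * α ^ ((m + r) * (m + r - 1) / 2) / ∏ l ∈ Finset.range (m + r), (1 - α ^ (l + 1))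
      = pmfTerm α p r m := fun r m => by
    rw [pmfTerm, eulerCoeff, qPochhammer, Nat.choose_two_right]
    ring
  simp only [hterm] at hpr ⊢
  obtain rfl : pr = stationaryPmf α p := funext hpr
  have hprod := hasProd_stationaryPgf hα0.le hα1 p
  refine ⟨summable_abs_pmfTerm hα0.le hα1 p, fun r => stationaryPmf_nonneg hα0.le hα1 r hp0.le hp1,
    ?_, fun z _ => (hprod z).tprod_eq.symm⟩
  have hmass : stationaryPgf α p 1 = 1 := (hprod 1).unique (by simp)
  have hsum : HasSum (fun r => stationaryPmf α p r * 1 ^ r) (stationaryPgf α p 1) :=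
    (summable_stationaryPmf_mul_pow hα0.le hα1 p 1).hasSum
  simpa [hmass] using hsum
end

section
/- Let α ∈ (0,1) and 0 < p < 1/2. Set λ = ∑_{n=1}^∞ p^n / (n (1 − α^n)) and, for n ≥ 1, a_n = ((−1)^{n+1}/λ) · ∑_{j=n}^∞ C(j,n) · p^j / (j (1 − α^j)). Then λ is finite and positive, ∑_{n=1}^∞ |a_n| < ∞, ∑_{n=1}^∞ a_n = 1, and for every z ∈ [0,1] the marginal pgf of the stationary INAR(1) process with Bernoulli(p) innovations satisfies ∏_{i=0}^∞ (1 − p α^i (1 − z)) = exp( λ ( ∑_{n=1}^∞ a_n z^n − 1 ) ); that is, the marginal distribution is discrete pseudo compound Poisson PCPD(λ, {a_n}). -/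
/-!
Taking logarithms, `log (1 - x α ^ i) = -∑ n, (x α ^ i) ^ n / n`, and summing the geometric series
in `i` gives `log ∏ i, (1 - p α ^ i (1 - z)) = -∑ j, c j (1 - z) ^ j` with
`c j = p ^ j / (j (1 - α ^ j))`, so that `λ = ∑ j, c j`. Expanding `(1 - z) ^ j` binomially and
exchanging the order of summation, which is legitimate because `∑ j, c j 2 ^ j < ∞` for `p < 1/2`,
turns `λ - ∑ j, c j (1 - z) ^ j` into `λ ∑ n, a n z ^ n`.
-/

open Finset Real

lemma HasSum.sum_antidiagonal {f : ℕ × ℕ → ℝ} {s : ℝ} (hf : HasSum f s) :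
    HasSum (fun n => ∑ q ∈ antidiagonal n, f q) s :=
  (HasAntidiagonal.sigmaAntidiagonalEquivProd.hasSum_iff.2 hf).sigma
    fun n => (antidiagonal n).hasSum _

lemma summable_of_summable_sum_antidiagonal {f : ℕ × ℕ → ℝ} (hf : ∀ q, 0 ≤ f q)
    (h : Summable fun n => ∑ q ∈ antidiagonal n, f q) : Summable f := by
  rw [← HasAntidiagonal.sigmaAntidiagonalEquivProd.summable_iff]
  refine (summable_sigma_of_nonneg fun _ => hf _).2 ⟨fun n => .of_finite, ?_⟩
  simpa [tsum_fintype, sum_attach _ f] using h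

lemma sum_antidiagonal_choose_mul_pow (c : ℕ → ℝ) (z : ℝ) (n : ℕ) :
    ∑ q ∈ antidiagonal n, ((q.2 + q.1).choose q.1 : ℝ) * c (q.2 + q.1) * z ^ q.1 =
      c n * (1 + z) ^ n := by
  have hq : ∀ q ∈ antidiagonal n, ((q.2 + q.1).choose q.1 : ℝ) * c (q.2 + q.1) * z ^ q.1 =
      c n * (z ^ q.1 * (n.choose q.1)) := by
    intro q hq
    rw [add_comm q.2, mem_antidiagonal.1 hq]
    ring
  rw [sum_congr rfl hq, ← mul_sum, add_comm, add_pow, Nat.sum_antidiagonal_eq_sum_range_succ_mk]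
  simp

lemma hasSum_tsum_choose_mul_pow {c : ℕ → ℝ} {z : ℝ}
    (hc : Summable fun j => |c j| * (1 + |z|) ^ j) :
    HasSum (fun k => (∑' i, ((i + k).choose k : ℝ) * c (i + k)) * z ^ k)
      (∑' j, c j * (1 + z) ^ j) := by
  set F : ℕ × ℕ → ℝ := fun q => ((q.2 + q.1).choose q.1 : ℝ) * c (q.2 + q.1) * z ^ q.1
  have hF : Summable F := by
    refine Summable.of_norm (summable_of_summable_sum_antidiagonal (fun _ => norm_nonneg _) ?_)
    convert hc using 2 with n
    rw [← sum_antidiagonal_choose_mul_pow (fun j => |c j|)]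
    simp [F]
  have hdiag : HasSum (fun n => c n * (1 + z) ^ n) (∑' q, F q) := by
    simpa only [F, sum_antidiagonal_choose_mul_pow] using hF.hasSum.sum_antidiagonal
  rw [hdiag.tsum_eq]
  refine hF.hasSum.prod_fiberwise fun k => ?_
  simpa only [F, tsum_mul_right] using (hF.prod_factor k).hasSum

lemma abs_mul_pow_lt_one {x α : ℝ} (hx : |x| < 1) (hα : |α| ≤ 1) (i : ℕ) : |x * α ^ i| < 1 := by
  rw [abs_mul, abs_pow]
  exact (mul_le_of_le_one_right (abs_nonneg x) (pow_le_one₀ (abs_nonneg α) hα)).trans_lt hx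

-- The `n = 0` term of the series is `1 / 0 = 0`.
lemma hasSum_log_one_sub_mul_pow {x α : ℝ} (hx : |x| < 1) (hα : |α| < 1) :
    HasSum (fun i => log (1 - x * α ^ i)) (-∑' n : ℕ, x ^ n / (n * (1 - α ^ n))) := by
  let H : ℕ × ℕ → ℝ := fun q => (x * α ^ q.1) ^ (q.2 + 1) / ((q.2 : ℝ) + 1)
  have hH : Summable H := by
    have hα' : Summable fun i : ℕ => ‖|α| ^ i‖ := by
      simpa using summable_geometric_of_lt_one (abs_nonneg α) hα
    have hx' : Summable fun n : ℕ => ‖|x| ^ (n + 1)‖ := by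
      simpa using (summable_nat_add_iff 1).2 (summable_geometric_of_lt_one (abs_nonneg x) hx)
    refine (summable_mul_of_summable_norm hα' hx').of_norm_bounded fun ⟨i, n⟩ => ?_
    have hαi : |α| ^ (i * (n + 1)) ≤ |α| ^ i :=
      pow_le_pow_of_le_one (abs_nonneg α) hα.le (Nat.le_mul_of_pos_right i n.succ_pos)
    have hn : (1 : ℝ) ≤ |(n : ℝ) + 1| := by rw [abs_of_pos (by positivity)]; simp
    simp only [H, norm_div, Real.norm_eq_abs, abs_mul, abs_pow, mul_pow, ← pow_mul]
    calc |x| ^ (n + 1) * |α| ^ (i * (n + 1)) / |(n : ℝ) + 1|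
        ≤ |x| ^ (n + 1) * |α| ^ (i * (n + 1)) := div_le_self (by positivity) hn
      _ ≤ |α| ^ i * |x| ^ (n + 1) := by rw [mul_comm]; gcongr
  have hfib_log (i : ℕ) : HasSum (fun n => H (i, n)) (-log (1 - x * α ^ i)) := by
    exact (Real.hasSum_pow_div_log_of_abs_lt_one (abs_mul_pow_lt_one hx hα.le i) :)
  have hfib_geom (n : ℕ) :
      HasSum (fun i => H (i, n)) (x ^ (n + 1) / ((n + 1 : ℕ) * (1 - α ^ (n + 1)))) := by
    have hαn : |α ^ (n + 1)| < 1 := by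
      rw [abs_pow]; exact pow_lt_one₀ (abs_nonneg α) hα n.succ_ne_zero
    have hgeom := (hasSum_geometric_of_abs_lt_one hαn).mul_left (x ^ (n + 1) / ((n : ℝ) + 1))
    rw [show x ^ (n + 1) / ((n + 1 : ℕ) * (1 - α ^ (n + 1))) =
        x ^ (n + 1) / ((n : ℝ) + 1) * (1 - α ^ (n + 1))⁻¹ by push_cast; field_simp]
    exact hgeom.congr_fun fun i => by simp only [H]; ring
  have hsum_log := hH.hasSum.prod_fiberwise hfib_log
  have hsum_geom := ((Equiv.prodComm ℕ ℕ).hasSum_iff.2 hH.hasSum).prod_fiberwise hfib_geom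
  have hsum : HasSum (fun n : ℕ => x ^ n / (n * (1 - α ^ n))) (∑' q, H q) :=
    (hasSum_nat_add_iff' 1).1 (by simpa using hsum_geom)
  simpa [hsum.tsum_eq] using hsum_log.neg

lemma hasProd_one_sub_mul_pow {x α : ℝ} (hx : |x| < 1) (hα : |α| < 1) :
    HasProd (fun i => 1 - x * α ^ i) (exp (-∑' n : ℕ, x ^ n / (n * (1 - α ^ n)))) := by
  refine (hasSum_log_one_sub_mul_pow hx hα).rexp.congr_fun fun i => (exp_log ?_).symm
  linarith [le_abs_self (x * α ^ i), abs_mul_pow_lt_one hx hα.le i]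

lemma div_mul_one_sub_pow_le {p α : ℝ} (hp : 0 ≤ p) (hα₀ : 0 ≤ α) (hα₁ : α < 1) (j : ℕ) :
    p ^ j / (j * (1 - α ^ j)) ≤ p ^ j / (1 - α) := by
  rcases Nat.eq_zero_or_pos j with rfl | hj
  · simp [sub_nonneg.2 hα₁.le]
  have hαj : α ^ j ≤ α := pow_le_of_le_one hα₀ hα₁.le hj.ne'
  have hj' : (1 : ℝ) ≤ j := by exact_mod_cast hj
  gcongr
  nlinarith [mul_nonneg (sub_nonneg.2 hj') (sub_nonneg.2 (hαj.trans hα₁.le))]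

lemma summable_div_mul_one_sub_pow_mul_pow {p α r : ℝ} (hp : 0 ≤ p) (hr : 0 ≤ r)
    (hrp : r * p < 1) (hα₀ : 0 ≤ α) (hα₁ : α < 1) :
    Summable fun j : ℕ => p ^ j / (j * (1 - α ^ j)) * r ^ j := by
  refine ((summable_geometric_of_lt_one (by positivity) hrp).div_const (1 - α)).of_nonneg_of_le
    (fun j => mul_nonneg (div_nonneg (by positivity) (mul_nonneg j.cast_nonneg
      (sub_nonneg.2 (pow_le_one₀ hα₀ hα₁.le)))) (by positivity)) fun j => ?_
  rw [mul_pow, mul_comm (r ^ j), mul_div_right_comm]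
  exact mul_le_mul_of_nonneg_right (div_mul_one_sub_pow_le hp hα₀ hα₁ j) (by positivity)

/-- The weights `a n` of the pseudo compound Poisson distribution `PCPD(∑ c, a)` whose log-pgf is
`-∑ c j (1 - z) ^ j`. -/
noncomputable def pcpdWeight (c : ℕ → ℝ) (n : ℕ) : ℝ :=
  (-1) ^ (n + 1) / (∑' j, c j) * ∑' i, ((i + n).choose n : ℝ) * c (i + n)

section PseudoCompoundPoisson

variable {c : ℕ → ℝ}

lemma summable_abs_pcpdWeight (hc₀ : ∀ j, 0 ≤ c j) (hc : Summable fun j => |c j| * 2 ^ j) :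
    Summable fun m => |pcpdWeight c (m + 1)| := by
  have hc' : Summable fun j => |c j| * (1 + |(1 : ℝ)|) ^ j := by
    simpa [one_add_one_eq_two] using hc
  have hS : Summable fun k => ∑' i, ((i + k).choose k : ℝ) * c (i + k) := by
    simpa using (hasSum_tsum_choose_mul_pow hc').summable
  refine (((summable_nat_add_iff 1).2 hS).div_const |∑' j, c j|).congr fun m => ?_
  have hS₀ : 0 ≤ ∑' i, ((i + (m + 1)).choose (m + 1) : ℝ) * c (i + (m + 1)) :=
    tsum_nonneg fun i => mul_nonneg (Nat.cast_nonneg _) (hc₀ _)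
  rw [pcpdWeight, abs_mul, abs_div, abs_pow, abs_neg, abs_one, one_pow, abs_of_nonneg hS₀]
  ring

lemma hasSum_pcpdWeight_mul_pow (hc : Summable fun j => |c j| * 2 ^ j) (hc_ne : ∑' j, c j ≠ 0)
    {z : ℝ} (hz : |z| ≤ 1) :
    HasSum (fun m => pcpdWeight c (m + 1) * z ^ (m + 1))
      (1 - (∑' j, c j * (1 - z) ^ j) / ∑' j, c j) := by
  have hc' : Summable fun j => |c j| * (1 + |-z|) ^ j :=
    hc.of_nonneg_of_le (fun j => by positivity) fun j => by
      gcongr; rw [abs_neg]; linarith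
  have h := (hasSum_nat_add_iff' 1).2 (hasSum_tsum_choose_mul_pow hc')
  simp only [range_one, sum_singleton, Nat.choose_zero_right, Nat.cast_one, one_mul, add_zero,
    pow_zero, mul_one, ← sub_eq_add_neg] at h
  rw [show ∀ T, 1 - T / ∑' j, c j = -((T - ∑' j, c j) / ∑' j, c j) by
    intro T; field_simp; ring]
  refine (h.div_const _).neg.congr_fun fun m => ?_
  rw [pcpdWeight, neg_pow z, pow_succ (-1 : ℝ) (m + 1)]
  ring

lemma hasSum_pcpdWeight (hc : Summable fun j => |c j| * 2 ^ j) (hc_ne : ∑' j, c j ≠ 0)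
    (hc_zero : c 0 = 0) : HasSum (fun m => pcpdWeight c (m + 1)) 1 := by
  have h := hasSum_pcpdWeight_mul_pow hc hc_ne (z := 1) (by simp)
  simp only [one_pow, mul_one, sub_self] at h
  rwa [tsum_eq_single 0 fun j hj => by simp [hj], hc_zero, zero_mul, zero_div, sub_zero] at h

end PseudoCompoundPoisson

/-- Let `α ∈ (0,1)` and `0 < p < 1/2`. Set
`λ = ∑_{n=1}^∞ p^n/(n(1 − α^n))` and, for `n ≥ 1`,
`a_n = ((−1)^{n+1}/λ) ∑_{j=n}^∞ C(j,n) p^j/(j(1 − α^j))` (series indexed by `j = i + n`).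
Then `λ` is finite and positive, `∑ |a_n| < ∞`, `∑ a_n = 1`, and for every `z ∈ [0,1]`,
`∏_{i=0}^∞ (1 − p α^i (1 − z)) = exp(λ(∑_{n=1}^∞ a_n z^n − 1))`: the marginal distribution
of the stationary INAR(1) process with Bernoulli(p) innovations is `PCPD(λ, {a_n})`. -/
theorem stmt_14 (α p : ℝ) (hα : α ∈ Set.Ioo (0 : ℝ) 1) (hp : 0 < p) (hp2 : p < 1 / 2)
    (lam : ℝ)
    (hlam : HasSum (fun m : ℕ => p ^ (m + 1) / ((m + 1 : ℝ) * (1 - α ^ (m + 1)))) lam)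
    (a : ℕ → ℝ)
    (ha : ∀ n : ℕ, 1 ≤ n → a n = ((-1 : ℝ) ^ (n + 1) / lam) *
      ∑' i : ℕ, ((i + n).choose n : ℝ) * p ^ (i + n) / ((i + n : ℝ) * (1 - α ^ (i + n)))) :
    0 < lam ∧
    (Summable fun m : ℕ => |a (m + 1)|) ∧
    (∑' m : ℕ, a (m + 1)) = 1 ∧
    (∀ z ∈ Set.Icc (0 : ℝ) 1,
      (∏' i : ℕ, (1 - p * α ^ i * (1 - z))) =
        Real.exp (lam * ((∑' m : ℕ, a (m + 1) * z ^ (m + 1)) - 1))) := by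
  obtain ⟨hα₀, hα₁⟩ := hα
  set c : ℕ → ℝ := fun j => p ^ j / (j * (1 - α ^ j))
  have hc₀ (j : ℕ) : 0 ≤ c j :=
    div_nonneg (pow_nonneg hp.le j)
      (mul_nonneg j.cast_nonneg (sub_nonneg.2 (pow_le_one₀ hα₀.le hα₁.le)))
  have hc : Summable fun j => |c j| * 2 ^ j := by
    simpa only [abs_of_nonneg (hc₀ _)] using
      summable_div_mul_one_sub_pow_mul_pow hp.le zero_le_two (by linarith) hα₀.le hα₁
  have hc_sum : HasSum c lam := (hasSum_nat_add_iff' 1).1 (by simpa [c] using hlam)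
  have hlam_pos : 0 < lam := by
    refine lt_of_lt_of_le ?_ (le_hasSum hc_sum 1 fun j _ => hc₀ j)
    simpa [c] using div_pos hp (sub_pos.2 hα₁)
  have hlam_eq : ∑' j, c j = lam := hc_sum.tsum_eq
  have ha' (m : ℕ) : a (m + 1) = pcpdWeight c (m + 1) := by
    rw [ha (m + 1) m.succ_pos, pcpdWeight, hlam_eq]
    congr 1
    refine tsum_congr fun i => ?_
    simp only [c]
    push_cast
    ring
  have hc_ne : ∑' j, c j ≠ 0 := hlam_eq ▸ hlam_pos.ne'
  simp only [ha']
  refine ⟨hlam_pos, summable_abs_pcpdWeight hc₀ hc,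
    (hasSum_pcpdWeight hc hc_ne (by simp [c])).tsum_eq, fun z hz => ?_⟩
  have hx : |p * (1 - z)| < 1 := by
    rw [abs_of_nonneg (mul_nonneg hp.le (sub_nonneg.2 hz.2))]
    nlinarith [hz.1, hz.2]
  have hprod := hasProd_one_sub_mul_pow hx (abs_lt.2 ⟨by linarith, hα₁⟩)
  have hseries : ∑' n : ℕ, (p * (1 - z)) ^ n / (n * (1 - α ^ n)) = ∑' j, c j * (1 - z) ^ j :=
    tsum_congr fun j => by simp only [c]; rw [mul_pow]; ring
  have hz' : |z| ≤ 1 := abs_le.2 ⟨by linarith [hz.1], hz.2⟩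
  rw [(hasSum_pcpdWeight_mul_pow hc hc_ne hz').tsum_eq, hlam_eq,
    (hprod.congr_fun fun i => by ring).tprod_eq, hseries]
  congr 1
  field_simp
  ring
end
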